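/- arXiv:2601.06950 — 8 statements merged into one kernel-verified Lean document; each statement's English description precedes it below -/
import Mathlib

section
/- Let F be a field, let n, m ≥ 1, and let φ : M_n(F) → M_m(F) be a linear map such that φ(I_n) = I_m and such that φ preserves the normalized rank, i.e. m · rank(a) = n · rank(φ(a)) for every a ∈ M_n(F). Then φ maps idempotents to idempotents: for every a ∈ M_n(F) with a² = a one has φ(a)² = φ(a). -/
open Matrix LinearMap

private lemma rank_add_rank_one_sub_of_idem {F : Type*} [Field F] {k : ℕ}
    {a : Matrix (Fin k) (Fin k) F} (ha : a * a = a) :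
    a.rank + (1 - a).rank = k := by
  have haz : a * (1 - a) = 0 := by rw [mul_sub, mul_one, ha, sub_self]
  have hker : LinearMap.range (1 - a).mulVecLin = LinearMap.ker a.mulVecLin := by
    apply le_antisymm
    · rintro x ⟨y, rfl⟩
      simp [Matrix.mulVecLin_apply, Matrix.mulVec_mulVec, haz, Matrix.mulVec_sub, ha]
    · intro x hx
      simp only [LinearMap.mem_ker, Matrix.mulVecLin_apply] at hx
      exact ⟨x, by simp [Matrix.mulVecLin_apply, Matrix.sub_mulVec, Matrix.one_mulVec, hx]⟩
  have hrn := LinearMap.finrank_range_add_finrank_ker a.mulVecLin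
  rw [Matrix.rank, Matrix.rank, hker, hrn]
  simp

/-- A unital linear map between matrix algebras preserving the normalized rank
maps idempotents to idempotents. -/
theorem normalized_rank_preserver_maps_idempotents_to_idempotents
    (F : Type*) [Field F] (n m : ℕ) (hn : 1 ≤ n) (hm : 1 ≤ m)
    (φ : Matrix (Fin n) (Fin n) F →ₗ[F] Matrix (Fin m) (Fin m) F)
    (hone : φ 1 = 1)
    (hrank : ∀ a : Matrix (Fin n) (Fin n) F, m * a.rank = n * (φ a).rank)
    (a : Matrix (Fin n) (Fin n) F) (ha : a * a = a) :
    φ a * φ a = φ a := by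
  set b := φ a with hb
  have hφsub : φ (1 - a) = 1 - b := by rw [map_sub, hone]
  have hsum_a : a.rank + (1 - a).rank = n := rank_add_rank_one_sub_of_idem ha
  have hsum_b : b.rank + (1 - b).rank = m := by
    have h1 := hrank a
    have h2 := hrank (1 - a)
    rw [hφsub] at h2
    have : n * (b.rank + (1 - b).rank) = n * m := by
      rw [Nat.mul_add, ← h1, ← h2, ← Nat.mul_add, hsum_a, Nat.mul_comm]
    exact Nat.eq_of_mul_eq_mul_left (by omega) this
  have hsup : LinearMap.range b.mulVecLin ⊔ LinearMap.range (1 - b).mulVecLin = ⊤ := by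
    rw [eq_top_iff]
    intro x _
    have hx : x = b.mulVecLin x + (1 - b).mulVecLin x := by
      simp [Matrix.mulVecLin_apply, Matrix.sub_mulVec, Matrix.one_mulVec]
    rw [hx]
    exact Submodule.add_mem _ (Submodule.mem_sup_left ⟨x, rfl⟩)
      (Submodule.mem_sup_right ⟨x, rfl⟩)
  have hinf : LinearMap.range b.mulVecLin ⊓ LinearMap.range (1 - b).mulVecLin = ⊥ := by
    have hdim := Submodule.finrank_sup_add_finrank_inf_eq
      (LinearMap.range b.mulVecLin) (LinearMap.range (1 - b).mulVecLin)
    rw [hsup, finrank_top] at hdim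
    have hfr : Module.finrank F (Fin m → F) = m := by simp
    rw [hfr] at hdim
    have hz : Module.finrank F
        ↥(LinearMap.range b.mulVecLin ⊓ LinearMap.range (1 - b).mulVecLin) = 0 := by
      rw [Matrix.rank, Matrix.rank] at hsum_b
      omega
    exact Submodule.finrank_eq_zero.mp hz
  have hcomm : b * (1 - b) = (1 - b) * b := by
    rw [mul_sub, mul_one, sub_mul, one_mul]
  have hzero : b * (1 - b) = 0 := by
    have hmve : ∀ x, (b * (1 - b)).mulVec x = 0 := by
      intro x
      have h1 : (b * (1 - b)).mulVec x ∈ LinearMap.range b.mulVecLin :=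
        ⟨(1 - b).mulVec x, by simp [Matrix.mulVecLin_apply, Matrix.mulVec_mulVec]⟩
      have h2 : (b * (1 - b)).mulVec x ∈ LinearMap.range (1 - b).mulVecLin :=
        ⟨b.mulVec x, by rw [hcomm]; simp [Matrix.mulVecLin_apply, Matrix.mulVec_mulVec, sub_mul, Matrix.sub_mulVec]⟩
      have hmem := hinf ▸ Submodule.mem_inf.mpr ⟨h1, h2⟩
      simpa using hmem
    ext i j
    have := congrFun (hmve (Pi.single j 1)) i
    rwa [Matrix.mulVec_single_one] at this
  have h4 : b * (1 - b) = b - b * b := by rw [mul_sub, mul_one]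
  rw [h4] at hzero
  exact (sub_eq_zero.mp hzero).symm
end

section
/- (Lemma 1) Let F be a field of characteristic different from 2, let n, m ≥ 1, and let φ : M_n(F) → M_m(F) be a linear map that preserves the normalized rank, i.e. m · rank(a) = n · rank(φ(a)) for every a ∈ M_n(F), and that maps the identity matrix I_n to the identity matrix I_m. Then φ is a Jordan homomorphism: φ(a²) = φ(a)² for every a ∈ M_n(F). -/
open Matrix

section Aux

variable {F : Type*} [Field F] {n m : ℕ}

lemma mulVec_ext {m : ℕ} {x y : Matrix (Fin m) (Fin m) F}
    (h : ∀ v, x *ᵥ v = y *ᵥ v) : x = y := by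
  ext i j
  have := congrFun (h (Pi.single j 1)) i
  simpa [Matrix.mulVec_single_one] using this

lemma idem_of_rank_add {m : ℕ} (x : Matrix (Fin m) (Fin m) F)
    (h : x.rank + (1 - x).rank = m) : x * x = x := by
  set f := x.mulVecLin with hf
  have hg : (1 - x).mulVecLin = LinearMap.id - f := by
    refine LinearMap.ext fun v => ?_
    simp [Matrix.mulVecLin_apply, Matrix.sub_mulVec, Matrix.one_mulVec, hf]
  have hker : LinearMap.ker f ≤ LinearMap.range (LinearMap.id - f) := by
    intro v hv
    refine ⟨v, ?_⟩
    simp only [LinearMap.sub_apply, LinearMap.id_apply]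
    rw [LinearMap.mem_ker.mp hv, sub_zero]
  have hrn : Module.finrank F (LinearMap.range f) + Module.finrank F (LinearMap.ker f) = m := by
    rw [LinearMap.finrank_range_add_finrank_ker f, Module.finrank_fin_fun]
  have hdim : Module.finrank F (LinearMap.range (LinearMap.id - f))
      = Module.finrank F (LinearMap.ker f) := by
    have h2 : x.rank = Module.finrank F (LinearMap.range f) := rfl
    have h3 : (1 - x).rank = Module.finrank F (LinearMap.range (LinearMap.id - f)) := by
      rw [Matrix.rank, hg]
    omega
  have heq : LinearMap.ker f = LinearMap.range (LinearMap.id - f) :=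
    Submodule.eq_of_le_of_finrank_le hker (le_of_eq hdim)
  apply mulVec_ext
  intro v
  have hv : v - f v ∈ LinearMap.ker f := by
    rw [heq]; exact ⟨v, rfl⟩
  have h0 := LinearMap.mem_ker.mp hv
  rw [map_sub, sub_eq_zero] at h0
  have h4 : f (f v) = f v := h0.symm
  calc (x * x) *ᵥ v = x *ᵥ (x *ᵥ v) := (Matrix.mulVec_mulVec v x x).symm
  _ = x *ᵥ v := h4

lemma rank_add_of_idem {m : ℕ} (x : Matrix (Fin m) (Fin m) F)
    (h : x * x = x) : x.rank + (1 - x).rank = m := by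
  set f := x.mulVecLin with hf
  have hg : (1 - x).mulVecLin = LinearMap.id - f := by
    refine LinearMap.ext fun v => ?_
    simp [Matrix.mulVecLin_apply, Matrix.sub_mulVec, Matrix.one_mulVec, hf]
  have hff : ∀ v, f (f v) = f v := by
    intro v
    calc f (f v) = (x * x) *ᵥ v := by
          simp only [hf, Matrix.mulVecLin_apply, Matrix.mulVec_mulVec]
    _ = f v := by rw [h]; rfl
  have heq : LinearMap.range (LinearMap.id - f) = LinearMap.ker f := by
    apply le_antisymm
    · rintro w ⟨v, rfl⟩
      simp only [LinearMap.mem_ker, LinearMap.sub_apply, LinearMap.id_apply, map_sub]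
      rw [hff v, sub_self]
    · intro v hv
      refine ⟨v, ?_⟩
      simp only [LinearMap.sub_apply, LinearMap.id_apply]
      rw [LinearMap.mem_ker.mp hv, sub_zero]
  have h3 : (1 - x).rank = Module.finrank F (LinearMap.ker f) := by
    rw [Matrix.rank, hg, heq]
  rw [h3]
  have h2 : x.rank = Module.finrank F (LinearMap.range f) := rfl
  rw [h2, LinearMap.finrank_range_add_finrank_ker f, Module.finrank_fin_fun]


noncomputable def Eb (i j : Fin n) : Matrix (Fin n) (Fin n) F := single i j 1

lemma Eb_mul_same (i j l : Fin n) : (Eb i j : Matrix (Fin n) (Fin n) F) * Eb j l = Eb i l := by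
  simp [Eb]

lemma Eb_mul_ne {j k : Fin n} (h : j ≠ k) (i l : Fin n) :
    (Eb i j : Matrix (Fin n) (Fin n) F) * Eb k l = 0 := by
  simpa [Eb] using (Matrix.single_mul_single_of_ne (c := (1:F)) i j k h (1:F) :
    single i j (1:F) * single k l (1:F) = 0)

lemma Eb_idem (i : Fin n) : (Eb i i : Matrix (Fin n) (Fin n) F) * Eb i i = Eb i i :=
  Eb_mul_same i i i

lemma half_cancel {x y : Matrix (Fin m) (Fin m) F} (hchar : (2 : F) ≠ 0)
    (h : x + x = y + y) : x = y := by
  have h2 : (2 : F) • x = (2 : F) • y := by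
    rw [two_smul, two_smul]; exact h
  exact smul_right_injective _ hchar h2

section core

variable (hchar : (2 : F) ≠ 0)
  (φ : Matrix (Fin n) (Fin n) F →ₗ[F] Matrix (Fin m) (Fin m) F)
  (hid : ∀ p : Matrix (Fin n) (Fin n) F, p * p = p → φ p * φ p = φ p)

include hid hchar in
lemma corner_lemma (p x : Matrix (Fin n) (Fin n) F) (hp : p * p = p)
    (hpx : p * x + x * p = x) (hx : x * x = 0) :
    φ p * φ x + φ x * φ p = φ x ∧ φ x * φ x = 0 := by
  have h1 : (p + x) * (p + x) = p + x := by
    have : (p + x) * (p + x) = p * p + (p * x + x * p) + x * x := by noncomm_ring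
    rw [this, hp, hpx, hx, add_zero]
  have h2 : (p - x) * (p - x) = p - x := by
    have : (p - x) * (p - x) = p * p - (p * x + x * p) + x * x := by noncomm_ring
    rw [this, hp, hpx, hx, add_zero]
  have e1 : φ p * φ p + (φ p * φ x + φ x * φ p) + φ x * φ x = φ p + φ x := by
    calc φ p * φ p + (φ p * φ x + φ x * φ p) + φ x * φ x
        = (φ p + φ x) * (φ p + φ x) := by noncomm_ring
      _ = φ p + φ x := by rw [← map_add]; exact hid _ h1
  have e2 : φ p * φ p - (φ p * φ x + φ x * φ p) + φ x * φ x = φ p - φ x := by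
    calc φ p * φ p - (φ p * φ x + φ x * φ p) + φ x * φ x
        = (φ p - φ x) * (φ p - φ x) := by noncomm_ring
      _ = φ p - φ x := by rw [← map_sub]; exact hid _ h2
  rw [hid p hp] at e1 e2
  set A := φ p * φ x + φ x * φ p with hA
  set B := φ x * φ x with hB
  have hBB : B + B = (φ p + A + B) + (φ p - A + B) - (φ p + φ p) := by abel
  rw [e1, e2] at hBB
  have hB0 : B = 0 := by
    apply half_cancel hchar
    rw [hBB]; abel
  constructor
  · have := e1
    rw [hB0, add_zero] at this
    exact add_left_cancel this
  · exact hB0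

include hid hchar in
lemma orth_lemma (p q : Matrix (Fin n) (Fin n) F) (hp : p * p = p) (hq : q * q = q)
    (hpq : p * q = 0) (hqp : q * p = 0) :
    φ p * φ q = 0 ∧ φ q * φ p = 0 := by
  have h1 : (p + q) * (p + q) = p + q := by
    have : (p + q) * (p + q) = p * p + p * q + q * p + q * q := by noncomm_ring
    rw [this, hp, hq, hpq, hqp, add_zero, add_zero]
  have e1 : φ p * φ p + φ p * φ q + φ q * φ p + φ q * φ q = φ p + φ q := by
    calc φ p * φ p + φ p * φ q + φ q * φ p + φ q * φ q
        = (φ p + φ q) * (φ p + φ q) := by noncomm_ring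
      _ = φ p + φ q := by rw [← map_add]; exact hid _ h1
  rw [hid p hp, hid q hq] at e1
  set A := φ p * φ q with hA
  set B := φ q * φ p with hB
  have hAB : A + B = 0 := by
    have : A + B = (φ p + A + B + φ q) - (φ p + φ q) := by abel
    rw [this, e1]; abel
  have hBA : B = -A := by
    have : B = (A + B) - A := by abel
    rw [this, hAB]; abel
  have hA2 : A * A = -A := by
    calc A * A = φ p * (φ q * φ p) * φ q := by rw [hA]; noncomm_ring
      _ = φ p * (-A) * φ q := by rw [← hBA]
      _ = -((φ p * φ p) * (φ q * φ q)) := by rw [hA]; noncomm_ring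
      _ = -A := by rw [hid p hp, hid q hq]
  have hB2 : B * B = -B := by
    calc B * B = φ q * (φ p * φ q) * φ p := by rw [hB]; noncomm_ring
      _ = φ q * (-B) * φ p := by
            have hAB' : φ p * φ q = -B := by rw [← hA, hBA, neg_neg]
            rw [hAB']
      _ = -((φ q * φ q) * (φ p * φ p)) := by rw [hB]; noncomm_ring
      _ = -B := by rw [hid p hp, hid q hq]
  have h' : A * A = A := by
    have h := hB2
    rw [hBA] at h
    simpa [neg_mul, mul_neg] using h
  have h'' : -A = A := by rw [← hA2, h']
  have hA0 : A = 0 := by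
    have h2A : (2 : F) • A = 0 := by
      rw [two_smul]
      nth_rewrite 1 [← h'']
      exact neg_add_cancel A
    exact (smul_eq_zero.mp h2A).resolve_left hchar
  exact ⟨hA0, by rw [hBA, hA0, neg_zero]⟩

include hid hchar in
lemma chain_lemma (p q : Matrix (Fin n) (Fin n) F) (hp : p * p = p) (hq : q * q = q)
    (hqp : q * p = 0) :
    φ (p * q) = φ p * φ q + φ q * φ p := by
  set x := p * q with hx
  have hx2 : x * x = 0 := by
    calc x * x = p * (q * p) * q := by rw [hx]; noncomm_ring
      _ = 0 := by rw [hqp]; noncomm_ring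
  have hpx : p * x = x := by rw [hx, ← mul_assoc, hp]
  have hxp : x * p = 0 := by rw [hx, mul_assoc, hqp, mul_zero]
  have hqx : q * x = 0 := by rw [hx, ← mul_assoc, hqp, zero_mul]
  have hxq : x * q = x := by rw [hx, mul_assoc, hq]
  have c1 := corner_lemma hchar φ hid p x hp (by rw [hpx, hxp, add_zero]) hx2
  have c2 := corner_lemma hchar φ hid q x hq (by rw [hqx, hxq, zero_add]) hx2
  have ht : (p + q - x) * (p + q - x) = p + q - x := by
    have expand : (p + q - x) * (p + q - x)
        = p * p + q * q + x * x + p * q + q * p - p * x - x * p - q * x - x * q := by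
      noncomm_ring
    rw [expand, hp, hq, hx2, hqp, hpx, hxp, hqx, hxq, ← hx]
    abel
  have hφt : φ (p + q - x) = φ p + φ q - φ x := by rw [map_sub, map_add]
  have e' : φ p * φ p + φ q * φ q + φ x * φ x + (φ p * φ q + φ q * φ p)
      - (φ p * φ x + φ x * φ p) - (φ q * φ x + φ x * φ q) = φ p + φ q - φ x := by
    calc φ p * φ p + φ q * φ q + φ x * φ x + (φ p * φ q + φ q * φ p)
        - (φ p * φ x + φ x * φ p) - (φ q * φ x + φ x * φ q)
        = (φ p + φ q - φ x) * (φ p + φ q - φ x) := by noncomm_ring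
      _ = φ p + φ q - φ x := by rw [← hφt]; exact hid _ ht
  rw [hid p hp, hid q hq, c1.2, c1.1, c2.1] at e'
  have hfin : φ p * φ q + φ q * φ p
      = (φ p + φ q + 0 + (φ p * φ q + φ q * φ p) - φ x - φ x)
        - (φ p + φ q - φ x) + φ x := by abel
  rw [e'] at hfin
  rw [hfin]
  abel

end core

section units

variable (hchar : (2 : F) ≠ 0)
  (φ : Matrix (Fin n) (Fin n) F →ₗ[F] Matrix (Fin m) (Fin m) F)
  (hid : ∀ p : Matrix (Fin n) (Fin n) F, p * p = p → φ p * φ p = φ p)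

include hid hchar in
lemma left_corner {i j : Fin n} (h : i ≠ j) :
    φ (Eb i i) * φ (Eb i j) + φ (Eb i j) * φ (Eb i i) = φ (Eb i j)
      ∧ φ (Eb i j) * φ (Eb i j) = 0 :=
  corner_lemma hchar φ hid (Eb i i) (Eb i j) (Eb_idem i)
    (by rw [Eb_mul_same, Eb_mul_ne h.symm, add_zero])
    (by rw [Eb_mul_ne h.symm])

include hid hchar in
lemma right_corner {i j : Fin n} (h : i ≠ j) :
    φ (Eb j j) * φ (Eb i j) + φ (Eb i j) * φ (Eb j j) = φ (Eb i j) :=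
  (corner_lemma hchar φ hid (Eb j j) (Eb i j) (Eb_idem j)
    (by rw [Eb_mul_same, Eb_mul_ne h.symm, zero_add])
    (by rw [Eb_mul_ne h.symm])).1

include hid hchar in
lemma orth_units {i k : Fin n} (h : i ≠ k) :
    φ (Eb i i) * φ (Eb k k) = 0 ∧ φ (Eb k k) * φ (Eb i i) = 0 :=
  orth_lemma hchar φ hid (Eb i i) (Eb k k) (Eb_idem i) (Eb_idem k)
    (Eb_mul_ne h i k) (Eb_mul_ne h.symm k i)

include hid hchar in
lemma diag_far {i k l : Fin n} (hkl : k ≠ l) (hik : i ≠ k) (hil : i ≠ l) :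
    φ (Eb i i) * φ (Eb k l) = 0 ∧ φ (Eb k l) * φ (Eb i i) = 0 := by
  have hp' : ((Eb k k + Eb k l) : Matrix (Fin n) (Fin n) F) * (Eb k k + Eb k l)
      = Eb k k + Eb k l := by
    rw [add_mul, mul_add, mul_add, Eb_idem, Eb_mul_same, Eb_mul_ne hkl.symm,
      Eb_mul_ne hkl.symm, add_zero, add_zero]
  have horth := orth_lemma hchar φ hid (Eb k k + Eb k l) (Eb i i) hp' (Eb_idem i)
    (by rw [add_mul, Eb_mul_ne hik.symm, Eb_mul_ne hil.symm, add_zero])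
    (by rw [mul_add, Eb_mul_ne hik, Eb_mul_ne hik, add_zero])
  have hou := orth_units hchar φ hid (Ne.symm hik)
  constructor
  · have h1 := horth.2
    rw [map_add, mul_add, hou.2, zero_add] at h1
    exact h1
  · have h2 := horth.1
    rw [map_add, add_mul, hou.1, zero_add] at h2
    exact h2

include hid hchar in
lemma nil_pair (u v p : Matrix (Fin n) (Fin n) F) (hp : p * p = p)
    (hx : (u + v) * (u + v) = 0) (hpx : p * (u + v) + (u + v) * p = u + v)
    (hu : φ u * φ u = 0) (hv : φ v * φ v = 0) :
    φ u * φ v + φ v * φ u = 0 := by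
  have c := corner_lemma hchar φ hid p (u + v) hp hpx hx
  have hsq := c.2
  rw [map_add] at hsq
  have expand : (φ u + φ v) * (φ u + φ v)
      = φ u * φ u + φ v * φ v + (φ u * φ v + φ v * φ u) := by noncomm_ring
  rw [expand, hu, hv, zero_add, zero_add] at hsq
  exact hsq

include hid hchar in
lemma chain_case {i j l : Fin n} (hij : i ≠ j) (hjl : j ≠ l) (hil : i ≠ l) :
    φ (Eb i l) = φ (Eb i j) * φ (Eb j l) + φ (Eb j l) * φ (Eb i j) := by
  have hp : ((Eb i i + Eb i j) : Matrix (Fin n) (Fin n) F) * (Eb i i + Eb i j)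
      = Eb i i + Eb i j := by
    rw [add_mul, mul_add, mul_add, Eb_idem, Eb_mul_same, Eb_mul_ne hij.symm,
      Eb_mul_ne hij.symm, add_zero, add_zero]
  have hq : ((Eb j j + Eb j l) : Matrix (Fin n) (Fin n) F) * (Eb j j + Eb j l)
      = Eb j j + Eb j l := by
    rw [add_mul, mul_add, mul_add, Eb_idem, Eb_mul_same, Eb_mul_ne hjl.symm,
      Eb_mul_ne hjl.symm, add_zero, add_zero]
  have hqp : ((Eb j j + Eb j l) : Matrix (Fin n) (Fin n) F) * (Eb i i + Eb i j) = 0 := by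
    rw [add_mul, mul_add, mul_add, Eb_mul_ne hij.symm, Eb_mul_ne hij.symm,
      Eb_mul_ne hil.symm, Eb_mul_ne hil.symm]
    simp
  have hpq : ((Eb i i + Eb i j) : Matrix (Fin n) (Fin n) F) * (Eb j j + Eb j l)
      = Eb i j + Eb i l := by
    rw [add_mul, mul_add, mul_add, Eb_mul_ne hij, Eb_mul_ne hij,
      Eb_mul_same, Eb_mul_same]
    simp
  have hch := chain_lemma hchar φ hid (Eb i i + Eb i j) (Eb j j + Eb j l) hp hq hqp
  rw [hpq] at hch
  have hexp : φ (Eb i i + Eb i j) * φ (Eb j j + Eb j l)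
      + φ (Eb j j + Eb j l) * φ (Eb i i + Eb i j)
      = (φ (Eb i i) * φ (Eb j j) + φ (Eb j j) * φ (Eb i i))
        + (φ (Eb i i) * φ (Eb j l) + φ (Eb j l) * φ (Eb i i))
        + (φ (Eb j j) * φ (Eb i j) + φ (Eb i j) * φ (Eb j j))
        + (φ (Eb i j) * φ (Eb j l) + φ (Eb j l) * φ (Eb i j)) := by
    rw [map_add, map_add]
    noncomm_ring
  have hou := orth_units hchar φ hid hij
  have hfar := diag_far hchar φ hid hjl hij hil
  have hrc := right_corner hchar φ hid hij
  rw [hexp, hou.1, hou.2, hfar.1, hfar.2] at hch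
  have hrc' : φ (Eb j j) * φ (Eb i j) + φ (Eb i j) * φ (Eb j j) = φ (Eb i j) := hrc
  rw [hrc'] at hch
  -- hch : φ (Eb i j) + φ (Eb i l) = 0 + 0 + 0 + 0 + φ (Eb i j) + (...)
  have : φ (Eb i j) + φ (Eb i l)
      = φ (Eb i j) + (φ (Eb i j) * φ (Eb j l) + φ (Eb j l) * φ (Eb i j)) := by
    rw [map_add] at hch
    rw [hch]; abel
  exact add_left_cancel this

include hid hchar in
lemma swap_case {i j : Fin n} (hij : i ≠ j) :
    φ (Eb i i + Eb j j) = φ (Eb i j) * φ (Eb j i) + φ (Eb j i) * φ (Eb i j) := by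
  set u : Matrix (Fin n) (Fin n) F := Eb i j with hu
  set v : Matrix (Fin n) (Fin n) F := Eb j i with hv
  set p : Matrix (Fin n) (Fin n) F := Eb i i + Eb j j with hpdef
  set w : Matrix (Fin n) (Fin n) F := u + v with hw
  have huu : u * u = 0 := Eb_mul_ne hij.symm i j
  have hvv : v * v = 0 := Eb_mul_ne hij j i
  have huv : u * v = Eb i i := Eb_mul_same i j i
  have hvu : v * u = Eb j j := Eb_mul_same j i j
  have hp : p * p = p := by
    rw [hpdef, add_mul, mul_add, mul_add, Eb_idem, Eb_idem,
      Eb_mul_ne hij, Eb_mul_ne hij.symm]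
    simp
  have hww : w * w = p := by
    rw [hw, hpdef, add_mul, mul_add, mul_add, huu, hvv, huv, hvu]
    simp
  have hpw : p * w = w := by
    rw [hpdef, hw, add_mul, mul_add, mul_add, hu, hv, Eb_mul_same, Eb_mul_same,
      Eb_mul_ne hij, Eb_mul_ne hij.symm]
    simp
  have hwp : w * p = w := by
    rw [hpdef, hw, add_mul, mul_add, mul_add, hu, hv, Eb_mul_same, Eb_mul_same,
      Eb_mul_ne hij, Eb_mul_ne hij.symm]
    simp [add_comm]
  set c : F := (2 : F)⁻¹ with hc
  have hc2 : c * 2 = 1 := inv_mul_cancel₀ hchar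
  set q : Matrix (Fin n) (Fin n) F := c • (p + w) with hqdef
  set q' : Matrix (Fin n) (Fin n) F := c • (p - w) with hq'def
  have hsum2 : ((p + w) : Matrix (Fin n) (Fin n) F) * (p + w) = (2:F) • (p + w) := by
    have : (p + w) * (p + w) = p * p + p * w + w * p + w * w := by noncomm_ring
    rw [this, hp, hpw, hwp, hww, two_smul]
    abel
  have hdiff2 : ((p - w) : Matrix (Fin n) (Fin n) F) * (p - w) = (2:F) • (p - w) := by
    have : (p - w) * (p - w) = p * p - p * w - w * p + w * w := by noncomm_ring
    rw [this, hp, hpw, hwp, hww, two_smul]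
    abel
  have hmix : ((p + w) : Matrix (Fin n) (Fin n) F) * (p - w) = 0 := by
    have : (p + w) * (p - w) = p * p - p * w + w * p - w * w := by noncomm_ring
    rw [this, hp, hpw, hwp, hww]
    abel
  have hmix' : ((p - w) : Matrix (Fin n) (Fin n) F) * (p + w) = 0 := by
    have : (p - w) * (p + w) = p * p + p * w - w * p - w * w := by noncomm_ring
    rw [this, hp, hpw, hwp, hww]
    abel
  have smul_sq : ∀ (x : Matrix (Fin n) (Fin n) F), (c • x) * (c • x) = c • (c • (x * x)) := by
    intro x
    rw [smul_mul_assoc, mul_smul_comm]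
  have hq : q * q = q := by
    rw [hqdef, smul_sq, hsum2, smul_smul, smul_smul, mul_assoc, hc2, mul_one]
  have hq' : q' * q' = q' := by
    rw [hq'def, smul_sq, hdiff2, smul_smul, smul_smul, mul_assoc, hc2, mul_one]
  have hqq' : q * q' = 0 := by
    rw [hqdef, hq'def, smul_mul_assoc, mul_smul_comm, hmix, smul_zero, smul_zero]
  have hq'q : q' * q = 0 := by
    rw [hqdef, hq'def, smul_mul_assoc, mul_smul_comm, hmix', smul_zero, smul_zero]
  have horth := orth_lemma hchar φ hid q q' hq hq' hqq' hq'q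
  have hqsum : q + q' = p := by
    rw [hqdef, hq'def, ← smul_add]
    have : (p + w) + (p - w) = (2:F) • p := by rw [two_smul]; abel
    rw [this, smul_smul, hc2, one_smul]
  have hqdiff : q - q' = w := by
    rw [hqdef, hq'def, ← smul_sub]
    have : (p + w) - (p - w) = (2:F) • w := by rw [two_smul]; abel
    rw [this, smul_smul, hc2, one_smul]
  have hφw : φ w * φ w = φ p := by
    calc φ w * φ w = φ (q - q') * φ (q - q') := by rw [hqdiff]
      _ = (φ q - φ q') * (φ q - φ q') := by rw [map_sub]
      _ = φ q * φ q - φ q * φ q' - φ q' * φ q + φ q' * φ q' := by noncomm_ring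
      _ = φ q + φ q' := by rw [hid q hq, hid q' hq', horth.1, horth.2]; abel
      _ = φ (q + q') := (map_add φ q q').symm
      _ = φ p := by rw [hqsum]
  have hlc := (left_corner hchar φ hid hij).2
  have hlc' : φ v * φ v = 0 := (left_corner hchar φ hid hij.symm).2
  have hexp : φ w * φ w = φ u * φ v + φ v * φ u := by
    rw [hw, map_add]
    have : (φ u + φ v) * (φ u + φ v)
        = φ u * φ u + φ v * φ v + (φ u * φ v + φ v * φ u) := by noncomm_ring
    rw [this, hlc, hlc', zero_add, zero_add]
  rw [← hφw, hexp]

include hid hchar in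
lemma diag_offdiag {i k l : Fin n} (hkl : k ≠ l) :
    φ (Eb i i * Eb k l + Eb k l * Eb i i)
      = φ (Eb i i) * φ (Eb k l) + φ (Eb k l) * φ (Eb i i) := by
  by_cases hik : i = k
  · subst hik
    rw [Eb_mul_same, Eb_mul_ne hkl.symm, add_zero]
    exact ((corner_lemma hchar φ hid (Eb i i) (Eb i l) (Eb_idem i)
      (by rw [Eb_mul_same, Eb_mul_ne hkl.symm, add_zero])
      (by rw [Eb_mul_ne hkl.symm])).1).symm
  · by_cases hil : i = l
    · subst hil
      rw [Eb_mul_ne hik, Eb_mul_same, zero_add]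
      exact ((corner_lemma hchar φ hid (Eb i i) (Eb k i) (Eb_idem i)
        (by rw [Eb_mul_ne hik, Eb_mul_same, zero_add])
        (by rw [Eb_mul_ne hik])).1).symm
    · have hf := diag_far hchar φ hid hkl hik hil
      rw [Eb_mul_ne hik, Eb_mul_ne (fun h => hil h.symm), hf.1, hf.2]
      simp

include hid hchar in
lemma unit_jordan (i j k l : Fin n) :
    φ (Eb i j * Eb k l + Eb k l * Eb i j)
      = φ (Eb i j) * φ (Eb k l) + φ (Eb k l) * φ (Eb i j) := by
  by_cases hij : i = j
  · subst hij
    by_cases hkl : k = l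
    · subst hkl
      by_cases hik : i = k
      · subst hik
        rw [Eb_idem, map_add, hid _ (Eb_idem i)]
      · have hou := orth_units hchar φ hid hik
        rw [Eb_mul_ne hik, Eb_mul_ne (Ne.symm hik), hou.1, hou.2]
        simp
    · exact diag_offdiag hchar φ hid hkl
  · by_cases hkl : k = l
    · subst hkl
      have h := diag_offdiag hchar φ hid (i := k) hij
      rw [add_comm (Eb k k * Eb i j), add_comm (φ (Eb k k) * φ (Eb i j))] at h
      exact h
    · -- both off-diagonal
      by_cases hki : k = i
      · subst hki
        by_cases hlj : l = j
        · subst hlj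
          have h2 := (left_corner hchar φ hid hij).2
          rw [Eb_mul_ne (Ne.symm hij), h2]
          simp
        · -- same row: u = Eb k j, v = Eb k l, j ≠ l
          have huv : (Eb k j : Matrix (Fin n) (Fin n) F) * Eb k l = 0 :=
            Eb_mul_ne (Ne.symm hij) k l
          have hvu : (Eb k l : Matrix (Fin n) (Fin n) F) * Eb k j = 0 :=
            Eb_mul_ne (Ne.symm hkl) k j
          have hnp := nil_pair hchar φ hid (Eb k j) (Eb k l) (Eb k k) (Eb_idem k)
            (by rw [add_mul, mul_add, mul_add, huv, hvu,
                Eb_mul_ne (Ne.symm hij), Eb_mul_ne (Ne.symm hkl)]; simp)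
            (by rw [mul_add, add_mul, Eb_mul_same, Eb_mul_same,
                Eb_mul_ne (Ne.symm hij), Eb_mul_ne (Ne.symm hkl)]; simp)
            ((left_corner hchar φ hid hij).2) ((left_corner hchar φ hid hkl).2)
          rw [huv, hvu, hnp]
          simp
      · by_cases hkj : k = j
        · subst hkj
          by_cases hli : l = i
          · subst hli
            rw [Eb_mul_same, Eb_mul_same]
            have hsw := swap_case hchar φ hid hij
            rw [map_add] at hsw
            rw [← map_add] at hsw
            exact hsw
          · -- chain i → k → l
            rw [Eb_mul_same, Eb_mul_ne hli, add_zero]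
            exact chain_case hchar φ hid hij hkl (fun h => hli h.symm)
        · by_cases hli : l = i
          · subst hli
            -- reverse chain k → l(=i) → j
            rw [Eb_mul_ne (fun h => hkj h.symm), Eb_mul_same, zero_add]
            have h := chain_case hchar φ hid hkl hij hkj
            rw [h]; abel
          · by_cases hlj : l = j
            · subst hlj
              -- same column, u = Eb i l, v = Eb k l, i ≠ k
              have huv : (Eb i l : Matrix (Fin n) (Fin n) F) * Eb k l = 0 :=
                Eb_mul_ne (fun h => hkj h.symm) i l
              have hvu : (Eb k l : Matrix (Fin n) (Fin n) F) * Eb i l = 0 :=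
                Eb_mul_ne (fun h => hij h.symm) k l
              have hnp := nil_pair hchar φ hid (Eb i l) (Eb k l) (Eb l l) (Eb_idem l)
                (by rw [add_mul, mul_add, mul_add, huv, hvu,
                    Eb_mul_ne (fun h => hij h.symm), Eb_mul_ne (fun h => hkj h.symm)]; simp)
                (by rw [mul_add, add_mul, Eb_mul_same, Eb_mul_same,
                    Eb_mul_ne (fun h => hij h.symm), Eb_mul_ne (fun h => hkj h.symm)]; simp)
                ((left_corner hchar φ hid hij).2) ((left_corner hchar φ hid hkl).2)
              rw [huv, hvu, hnp]
              simp
            · -- disjoint indices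
              have huv : (Eb i j : Matrix (Fin n) (Fin n) F) * Eb k l = 0 :=
                Eb_mul_ne (fun h => hkj h.symm) i l
              have hvu : (Eb k l : Matrix (Fin n) (Fin n) F) * Eb i j = 0 :=
                Eb_mul_ne hli k j
              have hpp : ((Eb i i + Eb k k) : Matrix (Fin n) (Fin n) F) * (Eb i i + Eb k k)
                  = Eb i i + Eb k k := by
                simp only [mul_add, add_mul]
                rw [Eb_idem, Eb_idem, Eb_mul_ne (fun h => hki h.symm), Eb_mul_ne hki]
                simp
              have hnp := nil_pair hchar φ hid (Eb i j) (Eb k l) (Eb i i + Eb k k) hpp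
                (by simp only [mul_add, add_mul]
                    rw [huv, hvu, Eb_mul_ne (Ne.symm hij), Eb_mul_ne (Ne.symm hkl)]
                    simp)
                (by simp only [mul_add, add_mul]
                    rw [Eb_mul_same, Eb_mul_same, Eb_mul_ne (fun h => hki h.symm),
                      Eb_mul_ne hki, Eb_mul_ne (Ne.symm hij), Eb_mul_ne (fun h => hkj h.symm),
                      Eb_mul_ne hli, Eb_mul_ne (Ne.symm hkl)]
                    simp)
                ((left_corner hchar φ hid hij).2) ((left_corner hchar φ hid hkl).2)
              rw [huv, hvu, hnp]
              simp

include hid hchar in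
lemma jordan_of_units (a : Matrix (Fin n) (Fin n) F) : φ (a * a) = φ a * φ a := by
  classical
  set f : Fin n × Fin n → Matrix (Fin n) (Fin n) F :=
    fun p => a p.1 p.2 • Eb p.1 p.2 with hf
  set g : Fin n × Fin n → Matrix (Fin m) (Fin m) F :=
    fun p => a p.1 p.2 • φ (Eb p.1 p.2) with hg
  have ha : a = ∑ p : Fin n × Fin n, f p := by
    have hterm : ∀ i j, Matrix.single i j (a i j)
        = a i j • (Eb i j : Matrix (Fin n) (Fin n) F) := by
      intro i j; rw [Eb, Matrix.smul_single, smul_eq_mul, mul_one]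
    rw [hf, Fintype.sum_prod_type]
    simp only [← hterm]
    exact matrix_eq_sum_single a
  have hφf : ∀ p : Fin n × Fin n, φ (f p) = g p := by
    intro p; rw [hf, hg]; simp only [_root_.map_smul]
  have hφa : φ a = ∑ p : Fin n × Fin n, g p := by
    conv_lhs => rw [ha]
    rw [map_sum]
    simp only [hφf]
  have hpair : ∀ p q : Fin n × Fin n,
      φ (f p * f q + f q * f p) = g p * g q + g q * g p := by
    intro p q
    have h1 : f p * f q + f q * f p
        = (a p.1 p.2 * a q.1 q.2) •
          (Eb p.1 p.2 * Eb q.1 q.2 + Eb q.1 q.2 * Eb p.1 p.2) := by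
      rw [hf]
      simp only [smul_mul_assoc, mul_smul_comm, smul_smul, smul_add]
      rw [mul_comm (a q.1 q.2) (a p.1 p.2)]
    rw [h1, _root_.map_smul, unit_jordan hchar φ hid p.1 p.2 q.1 q.2]
    rw [hg]
    simp only [smul_add, smul_mul_assoc, mul_smul_comm, smul_smul]
    rw [mul_comm (a q.1 q.2) (a p.1 p.2)]
  have expand : a * a + a * a
      = ∑ p : Fin n × Fin n, ∑ q : Fin n × Fin n, (f p * f q + f q * f p) := by
    conv_lhs => rw [ha]
    rw [Finset.sum_mul_sum]
    nth_rewrite 2 [Finset.sum_comm]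
    rw [← Finset.sum_add_distrib]
    exact Finset.sum_congr rfl (fun p _ => by rw [← Finset.sum_add_distrib])
  have key : φ (a * a) + φ (a * a) = φ a * φ a + φ a * φ a := by
    rw [← map_add, expand, map_sum]
    simp only [map_sum, hpair]
    have split : ∑ p : Fin n × Fin n, ∑ q : Fin n × Fin n, (g p * g q + g q * g p)
        = (∑ p : Fin n × Fin n, ∑ q : Fin n × Fin n, g p * g q)
          + (∑ p : Fin n × Fin n, ∑ q : Fin n × Fin n, g q * g p) := by
      rw [← Finset.sum_add_distrib]
      exact Finset.sum_congr rfl (fun p _ => by rw [← Finset.sum_add_distrib])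
    rw [split, hφa, Finset.sum_mul_sum]
    congr 1
    exact Finset.sum_comm
  exact half_cancel hchar key

end units

end Aux

/-- (Lemma 1) Over a field of characteristic ≠ 2, a unital linear map between matrix
algebras preserving the normalized rank is a Jordan homomorphism. -/
theorem normalized_rank_preserver_is_jordan_homomorphism
    (F : Type*) [Field F] (hchar : (2 : F) ≠ 0)
    (n m : ℕ) (hn : 1 ≤ n) (hm : 1 ≤ m)
    (φ : Matrix (Fin n) (Fin n) F →ₗ[F] Matrix (Fin m) (Fin m) F)
    (hone : φ 1 = 1)
    (hrank : ∀ a : Matrix (Fin n) (Fin n) F, m * a.rank = n * (φ a).rank)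
    (a : Matrix (Fin n) (Fin n) F) :
    φ (a * a) = φ a * φ a := by
  have hid : ∀ p : Matrix (Fin n) (Fin n) F, p * p = p → φ p * φ p = φ p := by
    intro p hp
    apply idem_of_rank_add
    have h1 := rank_add_of_idem p hp
    have h2 := hrank p
    have h3 := hrank (1 - p)
    have h4 : φ (1 - p) = 1 - φ p := by rw [map_sub, hone]
    rw [h4] at h3
    have h5 : n * ((φ p).rank + (1 - φ p).rank) = n * m := by
      rw [Nat.mul_add, ← h2, ← h3, ← Nat.mul_add, h1, Nat.mul_comm]
    exact Nat.eq_of_mul_eq_mul_left (by omega) h5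
  exact jordan_of_units hchar φ hid a
end

section
/- (Lemma 2, upper bound) Let F be a field, n ≥ 1, and let a, b ∈ M_n(F). Regard det(t·a + b) as a polynomial in the indeterminate t, i.e. the determinant of the matrix over F[t] whose (i,j) entry is t·a_{ij} + b_{ij}. Then the degree of the polynomial det(t·a + b) is at most rank(a). -/
open Polynomial Matrix

-- If more than `rank a` rows of `a` are selected, the piecewise matrix has zero determinant.
lemma det_piecewise_eq_zero {F : Type*} [Field F] {n : ℕ}
    (a b : Matrix (Fin n) (Fin n) F) (s : Finset (Fin n)) (hs : a.rank < s.card) :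
    (Matrix.of (s.piecewise (fun i => a i) (fun i => b i))).det = 0 := by
  classical
  have hdep : ¬ LinearIndependent F (fun i : s => a i) := by
    intro hind
    have hmem : ∀ i : Fin n, a i ∈ LinearMap.range aᵀ.mulVecLin := by
      intro i
      refine ⟨Pi.single i 1, ?_⟩
      ext k
      simp [Matrix.mulVecLin, Matrix.mulVec, dotProduct, Pi.single_apply]
    have hind' : LinearIndependent F
        (fun i : s => (⟨a i, hmem i⟩ : LinearMap.range aᵀ.mulVecLin)) := by
      apply LinearIndependent.of_comp (LinearMap.range aᵀ.mulVecLin).subtype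
      exact hind
    have := hind'.fintype_card_le_finrank
    rw [Fintype.card_coe] at this
    have hr : Module.finrank F (LinearMap.range aᵀ.mulVecLin) = a.rank := by
      rw [← Matrix.rank_transpose a]; rfl
    omega
  rw [Fintype.not_linearIndependent_iff] at hdep
  obtain ⟨g, hg0, i0, hi0⟩ := hdep
  rw [← Matrix.exists_vecMul_eq_zero_iff]
  refine ⟨fun i => if h : i ∈ s then g ⟨i, h⟩ else 0, ?_, ?_⟩
  · intro hc
    apply hi0
    have := congrFun hc i0.1
    simpa [i0.2] using this
  · ext k
    have := congrFun hg0 k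
    simp only [Finset.sum_apply, Pi.smul_apply, smul_eq_mul, Pi.zero_apply] at this
    simp only [Matrix.vecMul, dotProduct, Pi.zero_apply, Matrix.of_apply]
    rw [← Finset.sum_subset (Finset.subset_univ s)]
    · rw [← this, ← Finset.sum_attach s]
      apply Finset.sum_congr rfl
      intro i hi
      simp [Finset.piecewise_eq_of_mem _ _ _ i.2]
    · intro i _ hi
      simp [hi]

/-- (Lemma 2, upper bound) For matrices `a b ∈ Mₙ(F)`, the degree of the polynomial
`det (t • a + b)` is at most `rank a`. -/
theorem degree_det_smulX_add_le_rank
    (F : Type*) [Field F] (n : ℕ) (hn : 1 ≤ n)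
    (a b : Matrix (Fin n) (Fin n) F) :
    (Matrix.det ((X : F[X]) • a.map C + b.map C)).degree ≤ (a.rank : WithBot ℕ) := by
  classical
  set u : Fin n → Fin n → F[X] := fun i => (a.map C) i with hu
  set v : Fin n → Fin n → F[X] := fun i => (b.map C) i with hv
  have hdet : ((X : F[X]) • a.map C + b.map C).det
      = Matrix.detRowAlternating ((fun i => (X : F[X]) • u i) + v) := rfl
  rw [hdet]
  rw [show (Matrix.detRowAlternating ((fun i => (X : F[X]) • u i) + v) : F[X])
      = Matrix.detRowAlternating.toMultilinearMap ((fun i => (X : F[X]) • u i) + v) from rfl]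
  rw [MultilinearMap.map_add_univ]
  refine le_trans (Polynomial.degree_sum_le _ _) ?_
  rw [Finset.sup_le_iff]
  intro s _
  -- rewrite the piecewise term
  have hw : s.piecewise (fun i => (X : F[X]) • u i) v
      = s.piecewise (fun i => (X : F[X]) • (s.piecewise u v) i) (s.piecewise u v) := by
    ext i k
    by_cases h : i ∈ s <;>
      simp [Finset.piecewise_eq_of_mem _ _ _ , Finset.piecewise_eq_of_notMem, h]
  rw [hw, MultilinearMap.map_piecewise_smul]
  simp only [Finset.prod_const, smul_eq_mul]
  have hC : Matrix.detRowAlternating.toMultilinearMap (s.piecewise u v)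
      = C ((Matrix.of (s.piecewise (fun i => a i) (fun i => b i))).det) := by
    have : (s.piecewise u v : Fin n → Fin n → F[X])
        = ((Matrix.of (s.piecewise (fun i => a i) (fun i => b i))).map C : Matrix _ _ F[X]) := by
      ext i k
      by_cases h : i ∈ s <;>
        simp [Finset.piecewise_eq_of_mem, Finset.piecewise_eq_of_notMem, h, hu, hv]
    rw [show Matrix.detRowAlternating.toMultilinearMap (s.piecewise u v)
        = (Matrix.of (s.piecewise u v)).det from rfl, this, ← RingHom.mapMatrix_apply]
    exact (RingHom.map_det C _).symm
  rw [hC]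
  by_cases hcard : s.card ≤ a.rank
  · refine le_trans (Polynomial.degree_mul_le _ _) ?_
    refine le_trans (add_le_add (Polynomial.degree_X_pow_le _) Polynomial.degree_C_le) ?_
    simp only [add_zero]
    exact_mod_cast hcard
  · rw [det_piecewise_eq_zero a b s (by omega)]
    simp
end

section
/- (Lemma 2, attainment) Let F be a field, n ≥ 1, and let a ∈ M_n(F). Then there exists a matrix b ∈ M_n(F) such that the polynomial det(t·a + b) ∈ F[t] has degree exactly rank(a). Consequently rank(a) = max { deg det(t·a + b) : b ∈ M_n(F) }. -/
open Polynomial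

private lemma sum_ite_card {F : Type*} [Field F] [DecidableEq F] {n : ℕ} (d : Fin n → F) :
    ∑ i : Fin n, (if d i ≠ 0 then (1 : WithBot ℕ) else 0)
      = ((Fintype.card {i // d i ≠ 0} : ℕ) : WithBot ℕ) := by
  classical
  rw [Fintype.card_subtype, Finset.card_filter, Nat.cast_sum]
  exact Finset.sum_congr rfl fun i _ => by split <;> simp

private lemma degree_det_diag_add_le {F : Type*} [Field F] [DecidableEq F] {n : ℕ}
    (d : Fin n → F) (c : Matrix (Fin n) (Fin n) F) :
    (Matrix.det ((X : F[X]) • (Matrix.diagonal d).map C + c.map C)).degree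
      ≤ ((Fintype.card {i // d i ≠ 0} : ℕ) : WithBot ℕ) := by
  classical
  set M := (X : F[X]) • (Matrix.diagonal d).map C + c.map C with hM
  have hent : ∀ i j, (M i j).degree ≤ (if d i ≠ 0 then (1 : WithBot ℕ) else 0) := by
    intro i j
    have hij : M i j = C (Matrix.diagonal d i j) * X + C (c i j) := by
      simp only [hM, Matrix.add_apply, Matrix.smul_apply, Matrix.map_apply, smul_eq_mul]
      ring
    by_cases hd : d i = 0
    · have : Matrix.diagonal d i j = 0 := by
        by_cases h : i = j
        · subst h; simpa [Matrix.diagonal_apply_eq] using hd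
        · simp [Matrix.diagonal_apply_ne _ h]
      rw [hij, this]
      simp [hd, degree_C_le]
    · rw [hij]
      simpa [hd] using degree_linear_le (a := Matrix.diagonal d i j) (b := c i j)
  rw [Matrix.det_apply]
  refine le_trans (Polynomial.degree_sum_le _ _) ?_
  refine Finset.sup_le fun σ _ => ?_
  have h1 : ((Equiv.Perm.sign σ : ℤˣ) • ∏ i, M (σ i) i).degree
      = (∏ i, M (σ i) i).degree := by
    rcases Int.units_eq_one_or (Equiv.Perm.sign σ) with h | h <;> rw [h] <;> simp
  rw [h1]
  refine le_trans (Polynomial.degree_prod_le _ _) ?_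
  refine le_trans (Finset.sum_le_sum fun i _ => hent (σ i) i) ?_
  rw [← sum_ite_card d]
  exact le_of_eq (Equiv.sum_comp σ fun i => if d i ≠ 0 then (1 : WithBot ℕ) else 0)

private lemma degree_det_diag_attain {F : Type*} [Field F] [DecidableEq F] {n : ℕ} (d : Fin n → F) :
    (Matrix.det ((X : F[X]) • (Matrix.diagonal d).map C
        + (Matrix.diagonal fun i => if d i = 0 then (1 : F) else 0).map C)).degree
      = ((Fintype.card {i // d i ≠ 0} : ℕ) : WithBot ℕ) := by
  classical
  have hmat : (X : F[X]) • (Matrix.diagonal d).map C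
      + (Matrix.diagonal fun i => if d i = 0 then (1 : F) else 0).map C
      = Matrix.diagonal (fun i => C (d i) * X + C (if d i = 0 then (1 : F) else 0)) := by
    ext i j
    by_cases h : i = j
    · subst h
      simp only [Matrix.add_apply, Matrix.smul_apply, Matrix.map_apply,
        Matrix.diagonal_apply_eq, smul_eq_mul]
      ring
    · simp [Matrix.diagonal_apply_ne _ h, Matrix.map_apply]
  rw [hmat, Matrix.det_diagonal, Polynomial.degree_prod, ← sum_ite_card d]
  refine Finset.sum_congr rfl fun i _ => ?_
  by_cases hd : d i = 0
  · simp [hd]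
  · simp only [hd, if_neg hd, ite_false]
    simpa [hd] using degree_linear (a := d i) (b := (0 : F)) hd

/-- (Lemma 2, attainment) For any `a ∈ Mₙ(F)` there is `b ∈ Mₙ(F)` with
`deg det (t • a + b) = rank a`; consequently `rank a = max { deg det (t • a + b) }`. -/
theorem exists_degree_det_smulX_add_eq_rank
    (F : Type*) [Field F] (n : ℕ) (hn : 1 ≤ n)
    (a : Matrix (Fin n) (Fin n) F) :
    (∃ b : Matrix (Fin n) (Fin n) F,
      (Matrix.det ((X : F[X]) • a.map C + b.map C)).degree = (a.rank : WithBot ℕ)) ∧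
    (∀ b : Matrix (Fin n) (Fin n) F,
      (Matrix.det ((X : F[X]) • a.map C + b.map C)).degree ≤ (a.rank : WithBot ℕ)) := by
  classical
  letI : DecidableEq F := Classical.decEq F
  obtain ⟨L, L', d, hfact⟩ :=
    Matrix.Pivot.exists_list_transvec_mul_diagonal_mul_list_transvec a
  set P := (L.map Matrix.TransvectionStruct.toMatrix).prod with hPdef
  set Q := (L'.map Matrix.TransvectionStruct.toMatrix).prod with hQdef
  have hPdet : P.det = 1 := Matrix.TransvectionStruct.det_toMatrix_prod L
  have hQdet : Q.det = 1 := Matrix.TransvectionStruct.det_toMatrix_prod L'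
  have hPu : IsUnit P.det := by rw [hPdet]; exact isUnit_one
  have hQu : IsUnit Q.det := by rw [hQdet]; exact isUnit_one
  -- rank computation
  have hrank : a.rank = Fintype.card {i // d i ≠ 0} := by
    rw [hfact, Matrix.rank_mul_eq_left_of_isUnit_det Q _ hQu,
      Matrix.rank_mul_eq_right_of_isUnit_det P _ hPu, Matrix.rank_diagonal]
  -- conjugation identity
  have key : ∀ c : Matrix (Fin n) (Fin n) F,
      (X : F[X]) • a.map C + (P * c * Q).map C
        = P.map C * ((X : F[X]) • (Matrix.diagonal d).map C + c.map C) * Q.map C := by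
    intro c
    rw [Matrix.mul_add, Matrix.add_mul]
    congr 1
    · rw [Matrix.mul_smul, Matrix.smul_mul, hfact,
        Matrix.map_mul, Matrix.map_mul]
    · rw [← Matrix.map_mul, ← Matrix.map_mul]
  have hPC : (P.map (C : F →+* F[X])).det = 1 := by
    have h := (RingHom.map_det (C : F →+* F[X]) P).symm
    rw [RingHom.mapMatrix_apply, hPdet, map_one] at h
    exact h
  have hQC : (Q.map (C : F →+* F[X])).det = 1 := by
    have h := (RingHom.map_det (C : F →+* F[X]) Q).symm
    rw [RingHom.mapMatrix_apply, hQdet, map_one] at h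
    exact h
  have detkey : ∀ c : Matrix (Fin n) (Fin n) F,
      ((X : F[X]) • a.map C + (P * c * Q).map C).det
        = ((X : F[X]) • (Matrix.diagonal d).map C + c.map C).det := by
    intro c
    rw [key c, Matrix.det_mul, Matrix.det_mul, hPC, hQC, one_mul, mul_one]
  have hsurj : ∀ b : Matrix (Fin n) (Fin n) F, ∃ c, P * c * Q = b := by
    intro b
    refine ⟨P⁻¹ * b * Q⁻¹, ?_⟩
    calc P * (P⁻¹ * b * Q⁻¹) * Q = (P * P⁻¹) * b * (Q⁻¹ * Q) := by
          simp only [Matrix.mul_assoc]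
      _ = b := by rw [Matrix.mul_nonsing_inv P hPu, Matrix.nonsing_inv_mul Q hQu,
          Matrix.one_mul, Matrix.mul_one]
  constructor
  · refine ⟨P * (Matrix.diagonal fun i => if d i = 0 then (1 : F) else 0) * Q, ?_⟩
    rw [detkey, degree_det_diag_attain, hrank]
  · intro b
    obtain ⟨c, rfl⟩ := hsurj b
    rw [detkey, hrank]
    exact degree_det_diag_add_le d c
end

section
/- (Lemma 3, matrix form) Let F be the field of real or complex numbers, let n, m ≥ 1, and let φ : M_n(F) → M_m(F) be a linear map that preserves the normalized determinant, i.e. |det(a)|^m = |det(φ(a))|^n for every a ∈ M_n(F) (equivalently, |det(a)|^{1/n} = |det(φ(a))|^{1/m} for all a). Then m · rank(a) ≤ n · rank(φ(a)) for every a ∈ M_n(F); that is, the normalized rank satisfies rank(a)/n ≤ rank(φ(a))/m. -/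
section Aux
open Module Submodule

/-- Step A: given `a`, there is `b` and a nonzero constant `c` with
`det (a + t • b) = t ^ (n - rank a) * c` for all scalars `t`. -/
lemma aux_exists_pencil {F : Type*} [Field F] {n : ℕ}
    (a : Matrix (Fin n) (Fin n) F) :
    ∃ (b : Matrix (Fin n) (Fin n) F) (c : F), c ≠ 0 ∧
      ∀ t : F, (a + t • b).det = t ^ (n - a.rank) * c := by
  classical
  set f : (Fin n → F) →ₗ[F] (Fin n → F) := Matrix.toLin' a with hf
  obtain ⟨U, hU⟩ := Submodule.exists_isCompl (LinearMap.ker f)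
  obtain ⟨V, hV⟩ := Submodule.exists_isCompl (LinearMap.range f)
  have hrank : a.rank = finrank F (LinearMap.range f) := by
    rw [hf, Matrix.toLin'_apply']; rfl
  have h1 := LinearMap.finrank_range_add_finrank_ker f
  rw [Module.finrank_fin_fun] at h1
  have hker : finrank F (LinearMap.ker f) = n - a.rank := by omega
  have hVrank : finrank F (LinearMap.ker f) = finrank F V := by
    have h2 := Submodule.finrank_add_eq_of_isCompl hV
    rw [Module.finrank_fin_fun] at h2
    omega
  let e : (LinearMap.ker f) ≃ₗ[F] V := LinearEquiv.ofFinrankEq _ _ hVrank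
  let proj : (Fin n → F) →ₗ[F] LinearMap.ker f :=
    (LinearMap.ker f).projectionOnto U hU
  let g : (Fin n → F) →ₗ[F] (Fin n → F) :=
    V.subtype ∘ₗ (e : LinearMap.ker f →ₗ[F] V) ∘ₗ proj
  have hgU : ∀ x ∈ U, g x = 0 := by
    intro x hx
    have hp : proj x = 0 := Submodule.projectionOnto_apply_of_mem_right hU hx
    show V.subtype (e (proj x)) = 0
    rw [hp, LinearEquiv.map_zero, map_zero]
  have hgV : ∀ x, g x ∈ V := fun x => (e (proj x)).2
  have hgker : ∀ x (hx : x ∈ LinearMap.ker f), g x = ↑(e ⟨x, hx⟩) := by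
    intro x hx
    simp [g, proj, Submodule.projectionOnto_apply_left hU ⟨x, hx⟩]
  have hinj : Function.Injective (f + g) := by
    rw [← LinearMap.ker_eq_bot, LinearMap.ker_eq_bot']
    intro x hx0
    have hx0' : f x + g x = 0 := hx0
    have hfx : f x = 0 := by
      refine (Submodule.disjoint_def.mp hV.disjoint) (f x) ⟨x, rfl⟩ ?_
      have : f x = -g x := by linear_combination (norm := module) hx0'
      rw [this]
      exact neg_mem (hgV x)
    have hgx : g x = 0 := by rwa [hfx, zero_add] at hx0'
    have hxk : x ∈ LinearMap.ker f := hfx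
    rw [hgker x hxk] at hgx
    have he0 : e ⟨x, hxk⟩ = 0 := Subtype.ext hgx
    have hx00 : (⟨x, hxk⟩ : LinearMap.ker f) = 0 := by
      apply e.injective; rw [he0, LinearEquiv.map_zero]
    simpa using congrArg Subtype.val hx00
  have hc : LinearMap.det (f + g) ≠ 0 := by
    have h := LinearEquiv.isUnit_det' (LinearEquiv.ofInjectiveEndo (f + g) hinj)
    have hco : ((LinearEquiv.ofInjectiveEndo (f + g) hinj : (Fin n → F) ≃ₗ[F] (Fin n → F)) :
        (Fin n → F) →ₗ[F] (Fin n → F)) = f + g :=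
      LinearMap.ext fun x => congrFun (LinearEquiv.coe_ofInjectiveEndo (f + g) hinj) x
    rw [hco] at h
    exact h.ne_zero
  -- adapted basis
  let bU := Module.finBasis F U
  let bK := Module.finBasis F (LinearMap.ker f)
  let BB : Basis (Fin (finrank F U) ⊕ Fin (finrank F (LinearMap.ker f))) F (Fin n → F) :=
    (bU.prod bK).map (Submodule.prodEquivOfIsCompl U (LinearMap.ker f) hU.symm)
  have hBl : ∀ i, BB (Sum.inl i) ∈ U := by
    intro i
    have : BB (Sum.inl i) = ↑(bU i) + ↑((0 : LinearMap.ker f)) := by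
      simp only [BB, Basis.map_apply]
      rw [show ((bU.prod bK) (Sum.inl i)) = (bU i, (0 : LinearMap.ker f)) from
        Prod.ext (Basis.prod_apply_inl_fst _ _ _) (Basis.prod_apply_inl_snd _ _ _)]
      rfl
    rw [this]
    simpa using U.add_mem (bU i).2 (zero_mem U)
  have hBr : ∀ j, BB (Sum.inr j) ∈ LinearMap.ker f := by
    intro j
    have : BB (Sum.inr j) = ↑((0 : U)) + ↑(bK j) := by
      simp only [BB, Basis.map_apply]
      rw [show ((bU.prod bK) (Sum.inr j)) = ((0 : U), bK j) from
        Prod.ext (Basis.prod_apply_inr_fst _ _ _) (Basis.prod_apply_inr_snd _ _ _)]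
      rfl
    rw [this]
    simpa using (LinearMap.ker f).add_mem (zero_mem _) (bK j).2
  set M := LinearMap.toMatrix BB BB (f + g) with hM
  have key : ∀ t : F, LinearMap.toMatrix BB BB (f + t • g)
      = M * Matrix.diagonal (Sum.elim (fun _ => (1 : F)) (fun _ => t)) := by
    intro t
    ext i j
    rw [Matrix.mul_diagonal]
    cases j with
    | inl j =>
      have h0 : g (BB (Sum.inl j)) = 0 := hgU _ (hBl j)
      simp [M, LinearMap.toMatrix_apply, LinearMap.add_apply, LinearMap.smul_apply, h0]
    | inr j =>
      have h0 : f (BB (Sum.inr j)) = 0 := hBr j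
      simp only [Sum.elim_inr, M, LinearMap.toMatrix_apply, LinearMap.add_apply,
        LinearMap.smul_apply, h0, zero_add, map_smul, Finsupp.smul_apply, smul_eq_mul]
      ring
  refine ⟨LinearMap.toMatrix' g, LinearMap.det (f + g), hc, fun t => ?_⟩
  have h2 : a + t • LinearMap.toMatrix' g = LinearMap.toMatrix' (f + t • g) := by
    rw [map_add, map_smul, hf, LinearMap.toMatrix'_toLin']
  rw [h2, LinearMap.det_toMatrix', ← LinearMap.det_toMatrix BB (f + t • g), key t,
    Matrix.det_mul, Matrix.det_diagonal, Fintype.prod_sum_type]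
  simp only [Sum.elim_inl, Sum.elim_inr, Finset.prod_const_one, one_mul]
  rw [Finset.prod_const, Finset.card_univ, Fintype.card_fin,
    hM, LinearMap.det_toMatrix, hker, mul_comm]

end Aux

section Aux2
open Module Submodule Finset Matrix

/-- If more than `rank A` of the rows of a square matrix lie in the row space of `Aᵀ`,
(i.e. in the column space of `A`), the determinant vanishes. -/
lemma aux_det_piecewise_zero {F : Type*} [Field F] {m : ℕ}
    (A : Matrix (Fin m) (Fin m) F) (M : Matrix (Fin m) (Fin m) F) (S : Finset (Fin m))
    (hrows : ∀ i ∈ S, M i = Aᵀ i) (hS : A.rank < S.card) : M.det = 0 := by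
  classical
  by_contra hdet
  have hunit : IsUnit M := (Matrix.isUnit_iff_isUnit_det M).mpr (isUnit_iff_ne_zero.mpr hdet)
  have hli : LinearIndependent F (fun i => M i) :=
    Matrix.linearIndependent_rows_iff_isUnit.mpr hunit
  have hli2 : LinearIndependent F (fun i : S => M i) :=
    hli.comp (Subtype.val : S → Fin m) Subtype.val_injective
  set W := LinearMap.range A.mulVecLin with hW
  have hmem : ∀ i : S, M (i : Fin m) ∈ W := by
    intro i
    rw [hW, Matrix.range_mulVecLin, hrows i i.2]
    exact Submodule.subset_span ⟨(i : Fin m), rfl⟩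
  let w : S → W := fun i => ⟨M (i : Fin m), hmem i⟩
  have hliw : LinearIndependent F w :=
    (LinearIndependent.of_comp W.subtype (by exact hli2))
  have hcard := hliw.fintype_card_le_finrank
  rw [Fintype.card_coe] at hcard
  exact absurd hcard (by exact Nat.not_le.mpr (lt_of_lt_of_le hS (le_of_eq rfl)))

/-- Step B: determinant growth bound along a pencil. -/
lemma aux_det_bound {F : Type*} [RCLike F] {m : ℕ}
    (A B : Matrix (Fin m) (Fin m) F) :
    ∃ C : ℝ, 0 ≤ C ∧ ∀ t : F, ‖t‖ ≤ 1 →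
      ‖(A + t • B).det‖ ≤ C * ‖t‖ ^ (m - A.rank) := by
  classical
  set d : Finset (Fin m) → F := fun S => (Matrix.of (S.piecewise Aᵀ Bᵀ)).det with hd
  refine ⟨∑ S : Finset (Fin m), ‖d S‖, Finset.sum_nonneg fun S _ => norm_nonneg _, ?_⟩
  intro t ht
  have hexp : (A + t • B).det = ∑ S : Finset (Fin m), t ^ Sᶜ.card * d S := by
    rw [← Matrix.det_transpose, Matrix.transpose_add, Matrix.transpose_smul]
    have := (Matrix.detRowAlternating :
        (Fin m → F) [⋀^Fin m]→ₗ[F] F).toMultilinearMap.map_add_univ Aᵀ (t • Bᵀ)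
    rw [show (Aᵀ + t • Bᵀ).det = Matrix.detRowAlternating (Aᵀ + t • Bᵀ) from rfl]
    refine Eq.trans this ?_
    refine Finset.sum_congr rfl fun S _ => ?_
    have hpw : S.piecewise Aᵀ (t • Bᵀ)
        = fun i => (if i ∈ S then (1 : F) else t) • (S.piecewise Aᵀ Bᵀ) i := by
      funext i
      by_cases hi : i ∈ S
      · simp [Finset.piecewise_eq_of_mem S Aᵀ (t • Bᵀ) hi, Finset.piecewise_eq_of_mem S Aᵀ Bᵀ hi, hi]
      · rw [if_neg hi, Finset.piecewise_eq_of_notMem S Aᵀ (t • Bᵀ) hi,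
          Finset.piecewise_eq_of_notMem S Aᵀ Bᵀ hi]
        rfl
    rw [hpw, (Matrix.detRowAlternating :
        (Fin m → F) [⋀^Fin m]→ₗ[F] F).toMultilinearMap.map_smul_univ]
    have hprod : (∏ i, if i ∈ S then (1 : F) else t) = t ^ Sᶜ.card := by
      rw [← Finset.prod_mul_prod_compl S]
      rw [Finset.prod_congr rfl (fun i hi => if_pos hi),
        Finset.prod_congr rfl (fun i hi => if_neg (Finset.mem_compl.mp hi))]
      simp
    rw [hprod, smul_eq_mul]
    rfl
  rw [hexp]
  refine le_trans (norm_sum_le _ _) ?_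
  rw [Finset.sum_mul]
  refine Finset.sum_le_sum fun S _ => ?_
  rw [norm_mul, norm_pow]
  by_cases hz : d S = 0
  · simp [hz]
  · have hcard : S.card ≤ A.rank := by
      by_contra hgt
      exact hz (aux_det_piecewise_zero A _ S
        (fun i hi => Finset.piecewise_eq_of_mem S Aᵀ Bᵀ hi)
        (Nat.not_le.mp hgt))
    have hSc : m - A.rank ≤ Sᶜ.card := by
      rw [Finset.card_compl, Fintype.card_fin]
      omega
    have := pow_le_pow_of_le_one (norm_nonneg t) ht hSc
    calc ‖t‖ ^ Sᶜ.card * ‖d S‖ ≤ ‖t‖ ^ (m - A.rank) * ‖d S‖ :=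
          mul_le_mul_of_nonneg_right this (norm_nonneg _)
      _ = ‖d S‖ * ‖t‖ ^ (m - A.rank) := mul_comm _ _

end Aux2

open Module in
/-- (Lemma 3, matrix form) A linear map between matrix algebras over `ℝ` or `ℂ`
preserving the normalized determinant does not decrease the normalized rank. -/
theorem normalized_det_preserver_rank_le
    (F : Type*) [RCLike F] (n m : ℕ) (hn : 1 ≤ n) (hm : 1 ≤ m)
    (φ : Matrix (Fin n) (Fin n) F →ₗ[F] Matrix (Fin m) (Fin m) F)
    (hdet : ∀ a : Matrix (Fin n) (Fin n) F, ‖a.det‖ ^ m = ‖(φ a).det‖ ^ n)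
    (a : Matrix (Fin n) (Fin n) F) :
    m * a.rank ≤ n * (φ a).rank := by
  classical
  obtain ⟨b, c, hc, hab⟩ := aux_exists_pencil a
  obtain ⟨C, hC0, hCb⟩ := aux_det_bound (φ a) (φ b)
  set r := a.rank with hr
  set s := (φ a).rank with hs
  have hrn : r ≤ n := a.rank_le_width
  have hsm : s ≤ m := (φ a).rank_le_width
  have hcpos : 0 < ‖c‖ ^ m := pow_pos (norm_pos_iff.mpr hc) m
  have hkey : ∀ τ : ℝ, 0 < τ → τ ≤ 1 →
      ‖c‖ ^ m * τ ^ ((n - r) * m) ≤ C ^ n * τ ^ ((m - s) * n) := by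
    intro τ h0 h1
    have hnorm : ‖((τ : ℝ) : F)‖ = τ := by rw [RCLike.norm_ofReal, abs_of_pos h0]
    have h2 := hdet (a + (τ : F) • b)
    rw [hab, map_add, map_smul] at h2
    have h4 : ‖((τ : F)) ^ (n - r) * c‖ = τ ^ (n - r) * ‖c‖ := by
      rw [norm_mul, norm_pow, hnorm]
    rw [h4] at h2
    have h5 : ‖(φ a + (τ : F) • φ b).det‖ ≤ C * τ ^ (m - s) := by
      have := hCb ((τ : F)) (by rw [hnorm]; exact h1)
      rwa [hnorm] at this
    have h6 : ‖(φ a + (τ : F) • φ b).det‖ ^ n ≤ (C * τ ^ (m - s)) ^ n :=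
      pow_le_pow_left₀ (norm_nonneg _) h5 n
    calc ‖c‖ ^ m * τ ^ ((n - r) * m) = (τ ^ (n - r) * ‖c‖) ^ m := by
          rw [mul_pow, pow_mul]; ring
      _ = ‖(φ a + (τ : F) • φ b).det‖ ^ n := h2
      _ ≤ (C * τ ^ (m - s)) ^ n := h6
      _ = C ^ n * τ ^ ((m - s) * n) := by rw [mul_pow, pow_mul]
  have hexp : (m - s) * n ≤ (n - r) * m := by
    by_contra hlt
    push_neg at hlt
    set ε := ‖c‖ ^ m with hε
    set K := C ^ n with hK
    have hKnn : 0 ≤ K := pow_nonneg hC0 n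
    have hstep : ∀ τ : ℝ, 0 < τ → τ ≤ 1 → ε ≤ K * τ := by
      intro τ h0 h1
      have hk := hkey τ h0 h1
      have hτp : (0 : ℝ) < τ ^ ((n - r) * m) := pow_pos h0 _
      have hq : τ ^ ((m - s) * n) ≤ τ ^ ((n - r) * m) * τ := by
        have := pow_le_pow_of_le_one (le_of_lt h0) h1
          (show (n - r) * m + 1 ≤ (m - s) * n by omega)
        simpa [pow_succ] using this
      have h8 : K * τ ^ ((m - s) * n) ≤ (K * τ) * τ ^ ((n - r) * m) := by
        calc K * τ ^ ((m - s) * n) ≤ K * (τ ^ ((n - r) * m) * τ) :=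
              mul_le_mul_of_nonneg_left hq hKnn
          _ = (K * τ) * τ ^ ((n - r) * m) := by ring
      exact le_of_mul_le_mul_right (le_trans hk h8) hτp
    have hτpos : 0 < min 1 (ε / (2 * (K + 1))) :=
      lt_min one_pos (div_pos hcpos (by linarith))
    have h9 := hstep _ hτpos (min_le_left _ _)
    have h10 : K * min 1 (ε / (2 * (K + 1))) ≤ K * (ε / (2 * (K + 1))) :=
      mul_le_mul_of_nonneg_left (min_le_right _ _) hKnn
    have h13 : ε ≤ K * ε / (2 * (K + 1)) := by
      rw [mul_div_assoc]; exact le_trans h9 h10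
    rw [le_div_iff₀ (by linarith : (0 : ℝ) < 2 * (K + 1))] at h13
    nlinarith
  have e2 : (m - s) * n = n * m - s * n := by
    rw [Nat.sub_mul, Nat.mul_comm m n]
  have e1 : (n - r) * m = n * m - r * m := Nat.sub_mul n r m
  rw [e1, e2] at hexp
  have h14 : r * m ≤ n * m := Nat.mul_le_mul_right m hrn
  have h16 : r * m ≤ s * n := (tsub_le_tsub_iff_left h14).mp hexp
  rw [Nat.mul_comm m r, Nat.mul_comm n s]
  exact h16
end

section
/- (Corollary 3, matrix form) Let F be the field of real or complex numbers, let n, m ≥ 1, and let φ : M_n(F) → M_m(F) be a linear map such that |det(a)|^m = |det(φ(a))|^n for every a ∈ M_n(F). Then φ is injective. -/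
open Matrix

/-- determinant of the identity with one row replaced. -/
lemma det_updateRow_one {F : Type*} [Field F] {n : ℕ} (i : Fin n) (v : Fin n → F) :
    ((1 : Matrix (Fin n) (Fin n) F).updateRow i v).det = v i := by
  rw [Matrix.det_eq_sum_mul_adjugate_row _ i]
  have hadj : ∀ j : Fin n, adjugate ((1 : Matrix (Fin n) (Fin n) F).updateRow i v) j i
      = if j = i then 1 else 0 := by
    intro j
    rw [Matrix.adjugate_apply]
    have hrw : ((1 : Matrix (Fin n) (Fin n) F).updateRow i v).updateRow i (Pi.single j 1)
        = (1 : Matrix (Fin n) (Fin n) F).updateRow i (Pi.single j 1) := by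
      ext x y
      by_cases hx : x = i
      · subst hx; simp [Matrix.updateRow_self]
      · simp [Matrix.updateRow_ne hx]
    rw [hrw]
    by_cases hji : j = i
    · subst hji
      simp only [if_pos rfl]
      have : (1 : Matrix (Fin n) (Fin n) F).updateRow j (Pi.single j 1) = 1 := by
        ext x y
        by_cases hx : x = j
        · subst hx; simp [Matrix.one_apply, Pi.single_apply, eq_comm]
        · simp [Matrix.updateRow_ne hx]
      rw [this, Matrix.det_one]; simp
    · rw [if_neg hji]
      apply Matrix.det_zero_of_row_eq (Ne.symm hji)
      ext y
      simp [Matrix.updateRow_self, Matrix.updateRow_ne hji, Matrix.one_apply,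
        Pi.single_apply, eq_comm]
  simp [hadj]

/-- (Corollary 3, matrix form) A linear map between matrix algebras over `ℝ` or `ℂ`
preserving the normalized determinant is injective. -/
theorem normalized_det_preserver_injective
    (F : Type*) [RCLike F] (n m : ℕ) (hn : 1 ≤ n) (hm : 1 ≤ m)
    (φ : Matrix (Fin n) (Fin n) F →ₗ[F] Matrix (Fin m) (Fin m) F)
    (hdet : ∀ a : Matrix (Fin n) (Fin n) F, ‖a.det‖ ^ m = ‖(φ a).det‖ ^ n) :
    Function.Injective φ := by
  rw [injective_iff_map_eq_zero]
  intro a ha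
  by_contra h0
  obtain ⟨i₀, j₀, hij⟩ : ∃ i j, a i j ≠ 0 := by
    by_contra h
    push_neg at h
    exact h0 (by ext i j; simpa using h i j)
  -- the norm of the determinant is invariant under adding `a`
  have h1 : ∀ c : Matrix (Fin n) (Fin n) F, ‖(a + c).det‖ ^ m = ‖c.det‖ ^ m := by
    intro c
    rw [hdet (a + c), map_add, ha, zero_add, ← hdet c]
  -- construct an invertible matrix `b` with `a + b` singular
  set τ : Equiv.Perm (Fin n) := Equiv.swap i₀ j₀ with hτ
  set P : Matrix (Fin n) (Fin n) F := τ.permMatrix F with hP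
  have hPP : P * P = 1 := by
    rw [hP, ← PEquiv.toMatrix_trans, ← Equiv.toPEquiv_trans]
    rw [hτ, Equiv.swap_swap, Equiv.toPEquiv_refl, PEquiv.toMatrix_refl]
  have hdetP : P.det * P.det = 1 := by rw [← Matrix.det_mul, hPP, Matrix.det_one]
  have hdetP0 : P.det ≠ 0 := left_ne_zero_of_mul_eq_one hdetP
  have haP : (a * P) i₀ i₀ = a i₀ j₀ := by
    rw [hP, PEquiv.mul_toMatrix_toPEquiv]
    simp [hτ, Matrix.submatrix_apply]
  set u : Matrix (Fin n) (Fin n) F :=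
    (1 : Matrix (Fin n) (Fin n) F).updateRow i₀ (-(a * P) i₀) with hu
  have hdetu : u.det = -(a * P) i₀ i₀ := by
    rw [hu, det_updateRow_one]; rfl
  set b : Matrix (Fin n) (Fin n) F := u * P with hb
  have hdetb : b.det ≠ 0 := by
    rw [hb, Matrix.det_mul, hdetu, haP]
    exact mul_ne_zero (neg_ne_zero.mpr hij) hdetP0
  have hab : (a + b) * P = a * P + u := by
    rw [hb, add_mul, mul_assoc, hPP, mul_one]
  have hdetab : (a + b).det = 0 := by
    have hrow : ∀ j, ((a + b) * P) i₀ j = 0 := by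
      intro j
      rw [hab]
      simp [hu, Matrix.updateRow_self]
    have := Matrix.det_eq_zero_of_row_eq_zero i₀ hrow
    rw [Matrix.det_mul] at this
    rcases mul_eq_zero.mp this with h | h
    · exact h
    · exact absurd h hdetP0
  -- contradiction
  have := h1 b
  rw [hdetab, norm_zero] at this
  have hm0 : (0:ℝ) ^ m = 0 := zero_pow (by omega)
  rw [hm0] at this
  exact hdetb (norm_eq_zero.mp (pow_eq_zero_iff (by omega) |>.mp this.symm))
end

section
/- Let F be the field of real or complex numbers, let n ≥ 1, and let φ : M_n(F) → M_n(F) be a surjective linear map such that |det(φ(a))| = |det(a)| for every a ∈ M_n(F). Then φ is bijective and preserves rank: rank(φ(a)) = rank(a) for every a ∈ M_n(F). -/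
namespace DetPreserverAux

open Polynomial

variable {E : Type*} [Field E]

/-- det of a product map. -/
lemma myDetProdMap {M N : Type*} [AddCommGroup M] [Module E M] [AddCommGroup N] [Module E N]
    [FiniteDimensional E M] [FiniteDimensional E N] (f : M →ₗ[E] M) (g : N →ₗ[E] N) :
    LinearMap.det (f.prodMap g) = LinearMap.det f * LinearMap.det g := by
  classical
  let b1 := Module.finBasis E M
  let b2 := Module.finBasis E N
  rw [← LinearMap.det_toMatrix (b1.prod b2), LinearMap.toMatrix_prodMap,
    Matrix.det_fromBlocks_zero₂₁, LinearMap.det_toMatrix, LinearMap.det_toMatrix]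

/-- For any endomorphism `f` of a f.d. space there is an automorphism `g` with
`det (g + t f) = det g * (1+t)^rank f` for all `t`. -/
lemma exists_good_g {V : Type*} [AddCommGroup V] [Module E V] [FiniteDimensional E V]
    (f : V →ₗ[E] V) :
    ∃ g : V ≃ₗ[E] V, ∀ t : E,
      LinearMap.det (g.toLinearMap + t • f)
        = LinearMap.det g.toLinearMap
            * (1 + t) ^ (Module.finrank E (LinearMap.range f)) := by
  classical
  set K := LinearMap.ker f with hK
  set R := LinearMap.range f with hR
  obtain ⟨K', hKK'⟩ := Submodule.exists_isCompl K
  obtain ⟨R', hRR'⟩ := Submodule.exists_isCompl R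
  have hrn : Module.finrank E R + Module.finrank E K = Module.finrank E V :=
    LinearMap.finrank_range_add_finrank_ker f
  have hKK'n : Module.finrank E K + Module.finrank E K' = Module.finrank E V :=
    Submodule.finrank_add_eq_of_isCompl hKK'
  have hRR'n : Module.finrank E R + Module.finrank E R' = Module.finrank E V :=
    Submodule.finrank_add_eq_of_isCompl hRR'
  have hKR' : Module.finrank E K = Module.finrank E R' := by omega
  have hK'R : Module.finrank E K' = Module.finrank E R := by omega
  let iso2 : K ≃ₗ[E] R' := LinearEquiv.ofFinrankEq _ _ hKR'
  let iso1 : K' ≃ₗ[E] R :=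
    (Submodule.quotientEquivOfIsCompl K K' hKK').symm.trans f.quotKerEquivRange
  have hiso1 : ∀ x : K', (iso1 x : V) = f x := by
    intro x
    simp only [iso1, LinearEquiv.trans_apply, Submodule.quotientEquivOfIsCompl_symm_apply]
    exact f.quotKerEquivRange_apply_mk _
  let eK : (K × K') ≃ₗ[E] V := Submodule.prodEquivOfIsCompl K K' hKK'
  let eR : (R' × R) ≃ₗ[E] V := Submodule.prodEquivOfIsCompl R' R hRR'.symm
  let g : V ≃ₗ[E] V := eK.symm.trans ((iso2.prodCongr iso1).trans eR)
  refine ⟨g, fun t => ?_⟩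
  let ht : V →ₗ[E] V :=
    eK.toLinearMap ∘ₗ
      (LinearMap.prodMap (LinearMap.id : K →ₗ[E] K)
        (((1 + t) • LinearMap.id : K' →ₗ[E] K'))) ∘ₗ eK.symm.toLinearMap
  have key : g.toLinearMap + t • f = g.toLinearMap ∘ₗ ht := by
    apply LinearMap.ext
    intro x
    obtain ⟨⟨k, k'⟩, rfl⟩ := eK.surjective x
    have heK : eK (k, k') = (k : V) + (k' : V) := by
      simp [eK, Submodule.coe_prodEquivOfIsCompl]
    have hg : ∀ p : K, ∀ p' : K', g (eK (p, p')) = (iso2 p : V) + (iso1 p' : V) := by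
      intro p p'
      simp only [g, LinearEquiv.trans_apply, LinearEquiv.symm_apply_apply,
        LinearEquiv.prodCongr_apply, LinearMap.prodMap_apply]
      simp [eR, Submodule.coe_prodEquivOfIsCompl, LinearMap.coprod_apply]
    have hht : ht (eK (k, k')) = eK (k, (1 + t) • k') := by
      simp only [ht, LinearMap.comp_apply, LinearEquiv.coe_coe,
        LinearEquiv.symm_apply_apply, LinearMap.prodMap_apply, LinearMap.id_apply,
        LinearMap.smul_apply]
    have hfk : f (k : V) = 0 := k.2
    simp only [LinearMap.add_apply, LinearMap.comp_apply, LinearMap.smul_apply,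
      LinearEquiv.coe_coe, hht, hg]
    rw [heK, map_smul iso1, Submodule.coe_smul, hiso1, map_add f, hfk, zero_add,
      add_smul, one_smul]
    abel
  rw [key, LinearMap.det_comp]
  have hdetht : LinearMap.det ht = (1 + t) ^ Module.finrank E R := by
    have : ht = eK.toLinearMap ∘ₗ
        ((LinearMap.prodMap (LinearMap.id : K →ₗ[E] K)
          (((1 + t) • LinearMap.id : K' →ₗ[E] K')))) ∘ₗ (eK.symm).toLinearMap := rfl
    rw [this, LinearMap.det_conj (LinearMap.prodMap (LinearMap.id : K →ₗ[E] K)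
        (((1 + t) • LinearMap.id : K' →ₗ[E] K'))) eK, myDetProdMap,
      LinearMap.det_smul, LinearMap.det_id, LinearMap.det_id]
    simp [hK'R]
  rw [hdetht]

variable {n : ℕ}

/-- The polynomial `t ↦ det (b + t a)`. -/
noncomputable def detPoly (a b : Matrix (Fin n) (Fin n) E) : E[X] :=
  (Matrix.of fun i j => (C (b i j) + X * C (a i j))).det

lemma detPoly_eval (a b : Matrix (Fin n) (Fin n) E) (t : E) :
    (detPoly a b).eval t = (b + t • a).det := by
  unfold detPoly
  rw [show ∀ p : E[X], p.eval t = (evalRingHom t) p from fun _ => rfl,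
    RingHom.map_det]
  congr 1
  ext i j
  simp only [RingHom.mapMatrix_apply, Matrix.map_apply, Matrix.of_apply, map_add, map_mul,
    coe_evalRingHom, eval_C, eval_X, eval_mul, eval_add, Matrix.add_apply, Matrix.smul_apply,
    smul_eq_mul]

lemma detPoly_natDegree_le (a b : Matrix (Fin n) (Fin n) E) :
    (detPoly a b).natDegree ≤ a.rank := by
  classical
  set aC : Fin n → Fin n → E[X] := fun i j => C (a i j) with haC
  set bC : Fin n → Fin n → E[X] := fun i j => C (b i j) with hbC
  have hexp : detPoly a b =
      ∑ s : Finset (Fin n),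
        (X : E[X]) ^ s.card •
          C ((Matrix.of fun i j => if i ∈ s then a i j else b i j).det) := by
    have h1 : detPoly a b = (Matrix.detRowAlternating :
        (Fin n → E[X]) [⋀^Fin n]→ₗ[E[X]] E[X]).toMultilinearMap
          ((fun i => (X : E[X]) • aC i) + bC) := by
      show Matrix.detRowAlternating _ = Matrix.detRowAlternating _
      congr 1
      funext i j
      simp only [Matrix.of_apply, Pi.add_apply, Pi.smul_apply, smul_eq_mul, haC, hbC]
      ring
    rw [h1, MultilinearMap.map_add_univ]
    refine Finset.sum_congr rfl fun s _ => ?_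
    set base : Fin n → Fin n → E[X] := s.piecewise aC bC with hbase
    have hpw : s.piecewise (fun i => (X : E[X]) • aC i) bC
        = s.piecewise (fun i => (X : E[X]) • base i) base := by
      funext i
      by_cases h : i ∈ s <;>
        simp [hbase, Finset.piecewise_eq_of_mem, Finset.piecewise_eq_of_notMem, h]
    rw [hpw, MultilinearMap.map_piecewise_smul, Finset.prod_const]
    congr 1
    have hbaseC : base = fun i j =>
        C ((Matrix.of fun i j => if i ∈ s then a i j else b i j) i j) := by
      funext i j
      by_cases h : i ∈ s <;>
        simp [hbase, haC, hbC, Finset.piecewise_eq_of_mem, Finset.piecewise_eq_of_notMem, h]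
    show Matrix.det (Matrix.of base) = _
    rw [RingHom.map_det]
    apply congrArg
    funext i j
    rw [RingHom.mapMatrix_apply, Matrix.map_apply]
    exact congrFun (congrFun hbaseC i) j
  have hzero : ∀ s : Finset (Fin n), a.rank < s.card →
      (Matrix.of fun i j => if i ∈ s then a i j else b i j).det = 0 := by
    intro s hs
    set M : Matrix (Fin n) (Fin n) E := Matrix.of fun i j => if i ∈ s then a i j else b i j
    have hdep : ¬ LinearIndependent E (M : Fin n → Fin n → E) := by
      intro hLI
      have h2 : LinearIndependent E (fun i : {i // i ∈ s} => M i) :=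
        hLI.comp _ Subtype.val_injective
      have h3 : (fun i : {i // i ∈ s} => M (i : Fin n)) = fun i : {i // i ∈ s} => a i := by
        funext i j
        simp [M, i.2]
      rw [h3] at h2
      have h4 : LinearIndependent E fun i : {i // i ∈ s} =>
          (⟨a i, Submodule.subset_span (Set.mem_range_self _)⟩ :
            Submodule.span E (Set.range a)) :=
        LinearIndependent.of_comp (Submodule.span E (Set.range a)).subtype h2
      have h5 := h4.fintype_card_le_finrank
      rw [Fintype.card_coe] at h5
      rw [Matrix.rank_eq_finrank_span_row] at hs
      rw [show Matrix.row a = a from rfl] at hs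
      omega
    exact Matrix.detRowAlternating.map_linearDependent _ hdep
  rw [hexp]
  apply Polynomial.natDegree_sum_le_of_forall_le
  intro s _
  by_cases hs : s.card ≤ a.rank
  · rw [smul_eq_mul]
    refine le_trans (Polynomial.natDegree_mul_le) ?_
    simp only [Polynomial.natDegree_X_pow, Polynomial.natDegree_C, add_zero]
    exact hs
  · rw [hzero s (by omega), map_zero, smul_zero, Polynomial.natDegree_zero]
    exact Nat.zero_le _

lemma exists_detPoly_eq [Infinite E] (a : Matrix (Fin n) (Fin n) E) :
    ∃ b : Matrix (Fin n) (Fin n) E, b.det ≠ 0 ∧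
      detPoly a b = C b.det * (1 + X) ^ a.rank := by
  obtain ⟨g, hg⟩ := exists_good_g (E := E) (V := Fin n → E) (Matrix.mulVecLin a)
  refine ⟨LinearMap.toMatrix' g.toLinearMap, ?_, ?_⟩
  · rw [LinearMap.det_toMatrix']
    exact g.isUnit_det'.ne_zero
  · apply Polynomial.funext
    intro t
    rw [detPoly_eval]
    have hb : LinearMap.toMatrix' g.toLinearMap + t • a
        = LinearMap.toMatrix' (g.toLinearMap + t • Matrix.mulVecLin a) := by
      rw [map_add, map_smul]
      congr 2
      rw [← Matrix.toLin'_apply' a, LinearMap.toMatrix'_toLin']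
    rw [hb, LinearMap.det_toMatrix', hg t]
    simp only [eval_mul, eval_pow, eval_add, eval_one, eval_X, eval_C,
      LinearMap.det_toMatrix']
    rw [Matrix.rank]

lemma natDegree_eq_of_norm_eval_eq {F : Type*} [RCLike F] {p q : F[X]}
    (hp : p ≠ 0) (hq : q ≠ 0) (h : ∀ t : F, ‖p.eval t‖ = ‖q.eval t‖) :
    p.natDegree = q.natDegree := by
  set σ := starRingEnd F with hσ
  have key : p * p.map σ = q * q.map σ := by
    rw [← sub_eq_zero]
    apply Polynomial.eq_zero_of_infinite_isRoot
    apply Set.Infinite.mono (s := Set.range (fun r : ℝ => (r : F)))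
    · rintro x ⟨r, rfl⟩
      have hconj : ((r : F)) = σ ((r : F)) := (RCLike.conj_ofReal r).symm
      have hev : ∀ u : F[X], (u * u.map σ).eval ((r : F))
          = ((‖u.eval ((r : F))‖ ^ 2 : ℝ) : F) := by
        intro u
        rw [eval_mul, eval_map, hconj, Polynomial.eval₂_hom, ← hconj, RCLike.mul_conj]
        push_cast
        ring
      show Polynomial.IsRoot _ _
      rw [Polynomial.IsRoot, eval_sub, hev p, hev q, h, sub_self]
    · exact Set.infinite_range_of_injective RCLike.ofReal_injective
  have h1 : p.natDegree + (p.map σ).natDegree = q.natDegree + (q.map σ).natDegree := by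
    rw [← Polynomial.natDegree_mul hp (Polynomial.map_ne_zero hp),
      ← Polynomial.natDegree_mul hq (Polynomial.map_ne_zero hq), key]
  rw [Polynomial.natDegree_map, Polynomial.natDegree_map] at h1
  omega

lemma rank_le_of_det_preserver {F : Type*} [RCLike F] {n : ℕ}
    (φ : Matrix (Fin n) (Fin n) F →ₗ[F] Matrix (Fin n) (Fin n) F)
    (hdet : ∀ a : Matrix (Fin n) (Fin n) F, ‖(φ a).det‖ = ‖a.det‖)
    (a : Matrix (Fin n) (Fin n) F) : a.rank ≤ (φ a).rank := by
  obtain ⟨b, hb0, hpb⟩ := exists_detPoly_eq a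
  have hnormeq : ∀ t : F, ‖(detPoly a b).eval t‖ = ‖(detPoly (φ a) (φ b)).eval t‖ := by
    intro t
    rw [detPoly_eval, detPoly_eval, ← map_smul, ← map_add, hdet]
  have hbdet : (b + (0 : F) • a).det = b.det := by simp
  have hp0 : detPoly a b ≠ 0 := by
    intro h0
    apply hb0
    have h1 := detPoly_eval a b 0
    rw [h0] at h1
    rw [hbdet] at h1
    simpa using h1.symm
  have hq0 : detPoly (φ a) (φ b) ≠ 0 := by
    intro h0
    apply hb0
    have h1 := detPoly_eval (φ a) (φ b) 0
    rw [h0] at h1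
    have h2 : (φ b).det = 0 := by
      have h4 : (φ b + (0 : F) • φ a).det = (φ b).det := by simp
      rw [h4] at h1
      rw [← h1]
      simp
    have h3 := hdet b
    rw [h2] at h3
    simp only [norm_zero] at h3
    exact norm_eq_zero.mp h3.symm
  have hdeg := natDegree_eq_of_norm_eval_eq hp0 hq0 hnormeq
  have hdegp : (detPoly a b).natDegree = a.rank := by
    rw [hpb, Polynomial.natDegree_C_mul hb0, Polynomial.natDegree_pow]
    have h1X : (1 : F[X]) + X = X + C 1 := by rw [add_comm, Polynomial.C_1]
    rw [h1X, Polynomial.natDegree_X_add_C, mul_one]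
  calc a.rank = (detPoly a b).natDegree := hdegp.symm
    _ = (detPoly (φ a) (φ b)).natDegree := hdeg
    _ ≤ (φ a).rank := detPoly_natDegree_le _ _

end DetPreserverAux

/-- A surjective linear map `Mₙ(F) → Mₙ(F)` (`F = ℝ` or `ℂ`) preserving `|det|`
is bijective and preserves rank. -/
theorem surjective_det_preserver_bijective_and_rank_preserving
    (F : Type*) [RCLike F] (n : ℕ) (hn : 1 ≤ n)
    (φ : Matrix (Fin n) (Fin n) F →ₗ[F] Matrix (Fin n) (Fin n) F)
    (hsurj : Function.Surjective φ)
    (hdet : ∀ a : Matrix (Fin n) (Fin n) F, ‖(φ a).det‖ = ‖a.det‖) :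
    Function.Bijective φ ∧ ∀ a : Matrix (Fin n) (Fin n) F, (φ a).rank = a.rank := by
  open DetPreserverAux in
  have hbij : Function.Bijective φ :=
    ⟨(LinearMap.injective_iff_surjective).mpr hsurj, hsurj⟩
  refine ⟨hbij, fun a => ?_⟩
  let e := LinearEquiv.ofBijective φ hbij
  have hdetψ : ∀ c : Matrix (Fin n) (Fin n) F,
      ‖(e.symm.toLinearMap c).det‖ = ‖c.det‖ := by
    intro c
    have h1 := hdet (e.symm c)
    have h2 : φ (e.symm c) = c := e.apply_symm_apply c
    rw [show φ (e.symm c) = c from h2] at h1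
    exact h1.symm
  have h1 : a.rank ≤ (φ a).rank := rank_le_of_det_preserver φ hdet a
  have h2 : (φ a).rank ≤ a.rank := by
    have := rank_le_of_det_preserver e.symm.toLinearMap hdetψ (φ a)
    rwa [show e.symm.toLinearMap (φ a) = a from e.symm_apply_apply a] at this
  omega
end

section
/- (Lemma 1 combined with Lemma 3; unital case of Theorem 2 restricted to one matrix algebra) Let F be the field of real or complex numbers, let n ≥ 1, and let φ : M_n(F) → M_n(F) be a surjective linear map with φ(I_n) = I_n such that |det(φ(a))| = |det(a)| for every a ∈ M_n(F). Then φ is a Jordan homomorphism: φ(a²) = φ(a)² for every a ∈ M_n(F). -/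
open Polynomial RCLike

section Embedding

/-- The canonical ring embedding of an `RCLike` field into `ℂ`. -/
noncomputable def rclikeToComplex (F : Type*) [RCLike F] : F →+* ℂ where
  toFun x := ⟨re x, im x⟩
  map_one' := by apply Complex.ext <;> simp
  map_mul' x y := by apply Complex.ext <;> simp [mul_re, mul_im, Complex.mul_re, Complex.mul_im]
  map_zero' := by apply Complex.ext <;> simp
  map_add' x y := by apply Complex.ext <;> simp [map_add]

lemma star_eq_self_of_I_zero {F : Type*} [RCLike F] (h : RCLike.I (K := F) = 0) (x : F) :
    (starRingEnd F) x = x := by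
  rw [RCLike.conj_eq_iff_im]
  have h2 := RCLike.re_add_im x
  rw [h, mul_zero, add_zero] at h2
  calc im x = im ((re x : F)) := by rw [h2]
  _ = 0 := by simp

end Embedding

section Rigidity

lemma norm_rigidity {F : Type*} [RCLike F] {p q : F[X]} (hp : p.Monic) (hq : q.Monic)
    (hdeg : p.natDegree = q.natDegree) (h : ∀ t : F, ‖p.eval t‖ = ‖q.eval t‖) : p = q := by
  have key : ∀ t : F, p.eval t * (starRingEnd F) (p.eval t)
      = q.eval t * (starRingEnd F) (q.eval t) := by
    intro t; rw [RCLike.mul_conj, RCLike.mul_conj, h t]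
  rcases RCLike.I_mul_I_ax (K := F) with hI | hI
  · -- "real" case : star is the identity
    have hpq : p * p = q * q := by
      apply Polynomial.funext
      intro t
      simpa [star_eq_self_of_I_zero hI] using key t
    rcases mul_self_eq_mul_self_iff.mp hpq with h1 | h1
    · exact h1
    · exfalso
      have h2 : p.coeff q.natDegree = 1 := by rw [← hdeg]; exact hp.coeff_natDegree
      have h3 : p.coeff q.natDegree = -1 := by
        rw [h1, Polynomial.coeff_neg, hq.coeff_natDegree]
      rw [h2] at h3
      norm_num at h3
  · -- "complex" case
    set σ := starRingEnd F with hσ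
    set pc := p.map σ with hpc
    set qc := q.map σ with hqc
    have key2 : ∀ t : F, p.eval t * pc.eval (σ t) = q.eval t * qc.eval (σ t) := by
      intro t
      have e1 : pc.eval (σ t) = σ (p.eval t) := by rw [hpc, eval_map, Polynomial.eval₂_hom]
      have e2 : qc.eval (σ t) = σ (q.eval t) := by rw [hqc, eval_map, Polynomial.eval₂_hom]
      rw [e1, e2]; exact key t
    -- bivariate trick
    let cc : F →+* Polynomial (Polynomial F) := Polynomial.C.comp Polynomial.C
    let u : Polynomial (Polynomial F) :=
      Polynomial.C Polynomial.X + Polynomial.C (Polynomial.C RCLike.I) * Polynomial.X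
    let w : Polynomial (Polynomial F) :=
      Polynomial.C Polynomial.X - Polynomial.C (Polynomial.C RCLike.I) * Polynomial.X
    let G := p.eval₂ cc u * pc.eval₂ cc w - q.eval₂ cc u * qc.eval₂ cc w
    have hev : ∀ (x y : F), Polynomial.eval₂ (Polynomial.evalRingHom x) y G
        = p.eval (x + RCLike.I * y) * pc.eval (x - RCLike.I * y)
          - q.eval (x + RCLike.I * y) * qc.eval (x - RCLike.I * y) := by
      intro x y
      have hcomp : (Polynomial.eval₂RingHom (Polynomial.evalRingHom x) y).comp cc
          = RingHom.id F := by
        apply RingHom.ext; intro a; simp [cc]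
      have hu : Polynomial.eval₂ (Polynomial.evalRingHom x) y u = x + RCLike.I * y := by
        simp [u]
      have hw : Polynomial.eval₂ (Polynomial.evalRingHom x) y w = x - RCLike.I * y := by
        simp [w]
      have hr : ∀ (r : F[X]) (v : Polynomial (Polynomial F)),
          Polynomial.eval₂ (Polynomial.evalRingHom x) y (r.eval₂ cc v)
          = r.eval (Polynomial.eval₂ (Polynomial.evalRingHom x) y v) := by
        intro r v
        have := Polynomial.hom_eval₂ r cc (Polynomial.eval₂RingHom (Polynomial.evalRingHom x) y) v
        simp only [Polynomial.coe_eval₂RingHom] at this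
        rw [this, hcomp]
        rfl
      simp only [G, map_sub, map_mul, Polynomial.eval₂_sub, Polynomial.eval₂_mul, hr, hu, hw]
    have hG : G = 0 := by
      apply Polynomial.ext
      intro k
      rw [Polynomial.coeff_zero]
      apply Polynomial.eq_zero_of_infinite_isRoot
      apply Set.Infinite.mono (s := Set.range ((↑) : ℝ → F))
      swap
      · exact Set.infinite_range_of_injective RCLike.ofReal_injective
      rintro - ⟨xr, rfl⟩
      have hGx : G.map (Polynomial.evalRingHom (xr : F)) = 0 := by
        apply Polynomial.eq_zero_of_infinite_isRoot
        apply Set.Infinite.mono (s := Set.range ((↑) : ℝ → F))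
        swap
        · exact Set.infinite_range_of_injective RCLike.ofReal_injective
        rintro - ⟨yr, rfl⟩
        show Polynomial.IsRoot _ _
        rw [Polynomial.IsRoot, Polynomial.eval_map]
        have := hev (xr : F) (yr : F)
        rw [this]
        have hstar : σ ((xr : F) + RCLike.I * (yr : F)) = (xr : F) - RCLike.I * (yr : F) := by
          simp [hσ, map_add, map_mul, RCLike.conj_ofReal, RCLike.conj_I]; ring
        rw [← hstar]
        rw [sub_eq_zero]
        exact key2 _
      have := congrArg (fun r => Polynomial.coeff r k) hGx
      simpa [Polynomial.coeff_map] using this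
    -- decouple the two variables
    have hzw : ∀ z w' : F, p.eval z * pc.eval w' = q.eval z * qc.eval w' := by
      intro z w'
      have h0 := congrArg (Polynomial.eval₂ (Polynomial.evalRingHom ((z + w') / 2))
        (RCLike.I * (w' - z) / 2)) hG
      rw [hev] at h0
      have hu2 : (z + w') / 2 + RCLike.I * (RCLike.I * (w' - z) / 2) = z := by
        have : RCLike.I * (RCLike.I * (w' - z) / 2) = (RCLike.I * RCLike.I) * (w' - z) / 2 := by
          ring
        rw [this, hI]; ring
      have hw2 : (z + w') / 2 - RCLike.I * (RCLike.I * (w' - z) / 2) = w' := by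
        have : RCLike.I * (RCLike.I * (w' - z) / 2) = (RCLike.I * RCLike.I) * (w' - z) / 2 := by
          ring
        rw [this, hI]; ring
      rw [hu2, hw2] at h0
      simpa [sub_eq_zero] using h0
    -- pick a point where pc and qc don't vanish
    have hne : pc * qc ≠ 0 := ((hp.map σ).mul (hq.map σ)).ne_zero
    obtain ⟨w₀, hw₀⟩ : ∃ w₀ : F, (pc * qc).eval w₀ ≠ 0 := by
      by_contra hc
      push_neg at hc
      exact hne (Polynomial.zero_of_eval_zero _ hc)
    rw [Polynomial.eval_mul] at hw₀
    have hpc0 : pc.eval w₀ ≠ 0 := fun h0 => hw₀ (by rw [h0, zero_mul])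
    have heq : p * Polynomial.C (pc.eval w₀) = q * Polynomial.C (qc.eval w₀) := by
      apply Polynomial.funext
      intro z
      simp only [Polynomial.eval_mul, Polynomial.eval_C]
      exact hzw z w₀
    have hcoeff := congrArg (fun r => Polynomial.coeff r q.natDegree) heq
    simp only [Polynomial.coeff_mul_C] at hcoeff
    rw [← hdeg, hp.coeff_natDegree, hdeg, hq.coeff_natDegree, one_mul, one_mul] at hcoeff
    rw [hcoeff] at heq
    exact mul_right_cancel₀ (Polynomial.C_ne_zero.mpr (hcoeff ▸ hpc0)) heq

end Rigidity

section CharpolyFacts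

open Module

variable {K V : Type*} [Field K] [AddCommGroup V] [Module K V] [FiniteDimensional K V]

lemma eval_charpoly' {m : Type*} [Fintype m] [DecidableEq m] (M : Matrix m m K) (t : K) :
    M.charpoly.eval t = (t • (1 : Matrix m m K) - M).det := by
  have := RingHom.map_det (Polynomial.evalRingHom t) M.charmatrix
  rw [Matrix.charpoly] at *
  rw [show Polynomial.eval t (M.charmatrix.det)
    = (Polynomial.evalRingHom t) M.charmatrix.det from rfl, this]
  congr 1
  ext i j
  by_cases hij : i = j <;>
    simp [hij, Matrix.charmatrix_apply_eq, Matrix.charmatrix_apply_ne, Matrix.one_apply,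
      Matrix.sub_apply, Matrix.smul_apply]

lemma charpoly_sub_smul_one {m : Type*} [Fintype m] [DecidableEq m]
    (M : Matrix m m K) (μ : K) :
    (M - μ • 1).charpoly = M.charpoly.comp (X + C μ) := by
  have hcomp : M.charpoly.comp (X + C μ)
      = Polynomial.aeval (X + C μ : K[X]) M.charpoly := by
    rw [Polynomial.comp, Polynomial.aeval_def, Polynomial.algebraMap_eq]
  rw [hcomp, Matrix.charpoly, Matrix.charpoly, AlgHom.map_det]
  congr 1
  ext i j
  by_cases hij : i = j <;>
    simp [hij, Matrix.charmatrix_apply_eq, Matrix.charmatrix_apply_ne, map_sub,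
      Matrix.sub_apply, Matrix.smul_apply, Matrix.one_apply, sub_sub] <;> ring

lemma endCharpoly_sub_smul_one (f : Module.End K V) (μ : K) :
    (f - algebraMap K (Module.End K V) μ).charpoly = f.charpoly.comp (X + C μ) := by
  classical
  let b := Module.Free.chooseBasis K V
  rw [← LinearMap.charpoly_toMatrix (f - algebraMap K (Module.End K V) μ) b,
    ← LinearMap.charpoly_toMatrix f b]
  have : LinearMap.toMatrix b b (f - algebraMap K (Module.End K V) μ)
      = LinearMap.toMatrix b b f - μ • 1 := by
    rw [map_sub]
    congr 1
    rw [Algebra.algebraMap_eq_smul_one, map_smul, LinearMap.toMatrix_one]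
  rw [this, charpoly_sub_smul_one]

lemma finrank_maxGenEigenspace_eq (f : Module.End K V) (μ : K) :
    (finrank K (f.maxGenEigenspace μ) : ℕ)
      = (f.charpoly.comp (X + C μ)).natTrailingDegree := by
  have h1 : f.maxGenEigenspace μ
      = (f - algebraMap K (Module.End K V) μ).maxGenEigenspace 0 := by
    ext x
    simp only [Module.End.mem_maxGenEigenspace, Algebra.algebraMap_eq_smul_one, zero_smul,
      sub_zero]
  rw [h1, LinearMap.finrank_maxGenEigenspace_zero_eq, endCharpoly_sub_smul_one]

lemma maxGenEigenspace_ne_bot_iff_root (f : Module.End K V) (μ : K) :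
    f.maxGenEigenspace μ ≠ ⊥ ↔ μ ∈ f.charpoly.roots := by
  have hm : (f.charpoly.comp (X + C μ)).Monic := f.charpoly_monic.comp_X_add_C μ
  have hne : f.charpoly.comp (X + C μ) ≠ 0 := hm.ne_zero
  have hc0 : (f.charpoly.comp (X + C μ)).coeff 0 = f.charpoly.eval μ := by
    rw [Polynomial.coeff_zero_eq_eval_zero, Polynomial.eval_comp]
    simp
  constructor
  · intro hbot
    rw [Polynomial.mem_roots (f.charpoly_monic.ne_zero), Polynomial.IsRoot, ← hc0]
    by_contra hc
    have := Polynomial.natTrailingDegree_eq_zero.mpr (Or.inr hc)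
    rw [← finrank_maxGenEigenspace_eq] at this
    exact hbot (Submodule.finrank_eq_zero.mp this)
  · intro hroot hbot
    have h0 : finrank K (f.maxGenEigenspace μ) = 0 := by
      rw [hbot]; exact finrank_bot K V
    rw [finrank_maxGenEigenspace_eq] at h0
    rcases Polynomial.natTrailingDegree_eq_zero.mp h0 with h | h
    · exact hne h
    · rw [Polynomial.mem_roots (f.charpoly_monic.ne_zero), Polynomial.IsRoot] at hroot
      rw [hc0] at h
      exact h hroot

lemma trace_pow_restrict_gen (f : Module.End K V) (μ : K) (k : ℕ)
    (h : ∀ x ∈ f.maxGenEigenspace μ, (f ^ k) x ∈ f.maxGenEigenspace μ) :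
    LinearMap.trace K _ ((f ^ k).restrict h)
      = μ ^ k * (finrank K (f.maxGenEigenspace μ) : K) := by
  classical
  have hmt : ∀ x ∈ f.maxGenEigenspace μ, f x ∈ f.maxGenEigenspace μ :=
    f.mapsTo_maxGenEigenspace_of_comm rfl μ
  have hrpow : (f ^ k).restrict h = (f.restrict hmt) ^ k := by
    rw [Module.End.pow_restrict k hmt]
  rw [hrpow]
  set g := f.restrict hmt with hg
  set N := g - algebraMap K _ μ with hN
  have hnil : IsNilpotent N := by
    have h2 := f.isNilpotent_restrict_maxGenEigenspace_sub_algebraMap μ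
    have heq : N = LinearMap.restrict (f - algebraMap K (Module.End K V) μ)
        (f.mapsTo_maxGenEigenspace_of_comm (Algebra.mul_sub_algebraMap_commutes f μ) μ) := by
      ext x
      simp [hN, hg, LinearMap.restrict_apply, Algebra.algebraMap_eq_smul_one]
    rw [heq]
    exact h2
  have hgeq : g = algebraMap K _ μ + N := by rw [hN]; abel
  have hcomm : Commute (algebraMap K (Module.End K (f.maxGenEigenspace μ)) μ) N :=
    Algebra.commutes μ N
  rw [hgeq, hcomm.add_pow]
  rw [map_sum, Finset.sum_range_succ]
  have hz : ∀ i ∈ Finset.range k,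
      LinearMap.trace K _ ((algebraMap K (Module.End K (f.maxGenEigenspace μ)) μ) ^ i
        * N ^ (k - i) * (k.choose i : Module.End K (f.maxGenEigenspace μ))) = 0 := by
    intro i hi
    have hik : 0 < k - i := Nat.sub_pos_of_lt (Finset.mem_range.mp hi)
    have hnil2 : IsNilpotent (N ^ (k - i)) := hnil.pow_of_pos hik.ne'
    have hnil2' : IsNilpotent ((algebraMap K (Module.End K (f.maxGenEigenspace μ)) μ) ^ i
        * N ^ (k - i)) := (hcomm.pow_pow i (k - i)).isNilpotent_mul_left hnil2
    have hnil3 : IsNilpotent ((algebraMap K (Module.End K (f.maxGenEigenspace μ)) μ) ^ i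
        * N ^ (k - i) * (k.choose i : Module.End K (f.maxGenEigenspace μ))) :=
      (Nat.cast_commute (k.choose i) _).symm.isNilpotent_mul_right hnil2'
    exact (LinearMap.isNilpotent_trace_of_isNilpotent hnil3).eq_zero
  rw [Finset.sum_congr rfl hz, Finset.sum_const_zero, zero_add]
  simp only [Nat.sub_self, pow_zero, mul_one, Nat.choose_self, Nat.cast_one]
  rw [← map_pow, Algebra.algebraMap_eq_smul_one, map_smul, LinearMap.trace_one]
  rw [smul_eq_mul]

lemma trace_pow_formula [IsAlgClosed K] [DecidableEq K] (f : Module.End K V) (k : ℕ) :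
    LinearMap.trace K V (f ^ k)
      = ∑ μ ∈ f.charpoly.roots.toFinset,
          μ ^ k * ((f.charpoly.comp (X + C μ)).natTrailingDegree : K) := by
  classical
  have hds := DirectSum.isInternal_submodule_of_iSupIndep_of_iSup_eq_top
      f.independent_maxGenEigenspace f.iSup_maxGenEigenspace_eq_top
  have hfin : {μ | f.maxGenEigenspace μ ≠ ⊥}.Finite :=
    WellFoundedGT.finite_ne_bot_of_iSupIndep f.independent_maxGenEigenspace
  have hfk : ∀ μ : K, Set.MapsTo (f ^ k) (f.maxGenEigenspace μ) (f.maxGenEigenspace μ) :=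
    fun μ => f.mapsTo_maxGenEigenspace_of_comm (Commute.pow_right rfl k) μ
  rw [LinearMap.trace_eq_sum_trace_restrict' hds hfin hfk]
  have hsets : hfin.toFinset = f.charpoly.roots.toFinset := by
    ext μ
    rw [Set.Finite.mem_toFinset, Multiset.mem_toFinset]
    exact (maxGenEigenspace_ne_bot_iff_root f μ)
  rw [hsets]
  apply Finset.sum_congr rfl
  intro μ _
  refine (trace_pow_restrict_gen f μ k _).trans ?_
  rw [finrank_maxGenEigenspace_eq]

lemma trace_pow_eq_of_charpoly_eq [IsAlgClosed K] (f g : Module.End K V)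
    (h : f.charpoly = g.charpoly) (k : ℕ) :
    LinearMap.trace K V (f ^ k) = LinearMap.trace K V (g ^ k) := by
  classical
  rw [trace_pow_formula, trace_pow_formula, h]

end CharpolyFacts

section MatrixTransfer

lemma matrix_trace_pow_eq_of_charpoly_eq_C {n : ℕ} (M N : Matrix (Fin n) (Fin n) ℂ)
    (h : M.charpoly = N.charpoly) (k : ℕ) : (M ^ k).trace = (N ^ k).trace := by
  let b := Pi.basisFun ℂ (Fin n)
  have key : ∀ P : Matrix (Fin n) (Fin n) ℂ,
      (P ^ k).trace = LinearMap.trace ℂ _ ((Matrix.toLin' P) ^ k) := by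
    intro P
    rw [LinearMap.trace_eq_matrix_trace ℂ b, LinearMap.toMatrix_eq_toMatrix']
    congr 1
    have h0 : ∀ Q : Matrix (Fin n) (Fin n) ℂ, Matrix.toLin' Q = Matrix.toLinAlgEquiv' Q :=
      fun _ => rfl
    have : (Matrix.toLin' P) ^ k = Matrix.toLin' (P ^ k) := by
      rw [h0, h0, map_pow]
    rw [this, LinearMap.toMatrix'_toLin']
  have hcp : ∀ P : Matrix (Fin n) (Fin n) ℂ,
      LinearMap.charpoly (Matrix.toLin' P) = P.charpoly := by
    intro P
    have := LinearMap.charpoly_toMatrix (Matrix.toLin' P) b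
    rw [LinearMap.toMatrix_eq_toMatrix', LinearMap.toMatrix'_toLin'] at this
    exact this.symm
  rw [key, key]
  exact trace_pow_eq_of_charpoly_eq _ _ (by rw [hcp, hcp, h]) k

lemma matrix_trace_pow_eq_of_charpoly_eq {F : Type*} [RCLike F] {n : ℕ}
    (M N : Matrix (Fin n) (Fin n) F)
    (h : M.charpoly = N.charpoly) (k : ℕ) : (M ^ k).trace = (N ^ k).trace := by
  set τ := rclikeToComplex F with hτ
  apply τ.injective
  have hmap : ∀ P : Matrix (Fin n) (Fin n) F, τ ((P ^ k).trace) = ((P.map τ) ^ k).trace := by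
    intro P
    rw [← RingHom.mapMatrix_apply, ← map_pow]
    simp [Matrix.trace, Matrix.diag, map_sum, RingHom.mapMatrix_apply, Matrix.map_apply]
  rw [hmap, hmap]
  apply matrix_trace_pow_eq_of_charpoly_eq_C
  rw [Matrix.charpoly_map, Matrix.charpoly_map, h]

end MatrixTransfer

/-- A surjective unital linear map `Mₙ(F) → Mₙ(F)` (`F = ℝ` or `ℂ`) preserving `|det|`
is a Jordan homomorphism. -/
theorem surjective_unital_det_preserver_is_jordan
    (F : Type*) [RCLike F] (n : ℕ) (hn : 1 ≤ n)
    (φ : Matrix (Fin n) (Fin n) F →ₗ[F] Matrix (Fin n) (Fin n) F)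
    (hsurj : Function.Surjective φ) (hone : φ 1 = 1)
    (hdet : ∀ a : Matrix (Fin n) (Fin n) F, ‖(φ a).det‖ = ‖a.det‖)
    (a : Matrix (Fin n) (Fin n) F) :
    φ (a * a) = φ a * φ a := by
  -- characteristic polynomial is preserved
  have hcp : ∀ x : Matrix (Fin n) (Fin n) F, (φ x).charpoly = x.charpoly := by
    intro x
    apply norm_rigidity (Matrix.charpoly_monic _) (Matrix.charpoly_monic _)
    · rw [Matrix.charpoly_natDegree_eq_dim, Matrix.charpoly_natDegree_eq_dim]
    · intro t
      rw [eval_charpoly', eval_charpoly']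
      have hφ : t • (1 : Matrix (Fin n) (Fin n) F) - φ x = φ (t • 1 - x) := by
        rw [map_sub, map_smul, hone]
      rw [hφ, hdet]
  -- hence all power traces are preserved
  have htrk : ∀ (x : Matrix (Fin n) (Fin n) F) (k : ℕ), ((φ x) ^ k).trace = (x ^ k).trace :=
    fun x k => matrix_trace_pow_eq_of_charpoly_eq _ _ (hcp x) k
  have two_ne : (2 : F) ≠ 0 := by norm_num
  have six_ne : (6 : F) ≠ 0 := by norm_num
  -- quadratic trace form is preserved
  have hQ : ∀ x : Matrix (Fin n) (Fin n) F, (φ x * φ x).trace = (x * x).trace := by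
    intro x
    have := htrk x 2
    rwa [pow_two, pow_two] at this
  -- its polarization : the bilinear trace form is preserved
  have hB : ∀ x y : Matrix (Fin n) (Fin n) F, (φ x * φ y).trace = (x * y).trace := by
    intro x y
    have expand : ∀ u v : Matrix (Fin n) (Fin n) F,
        ((u + v) * (u + v)).trace
          = (u * u).trace + (v * v).trace + ((u * v).trace + (u * v).trace) := by
      intro u v
      have hid : (u + v) * (u + v) = u * u + (v * v + (u * v + v * u)) := by noncomm_ring
      rw [hid]
      simp only [Matrix.trace_add]
      rw [Matrix.trace_mul_comm v u]
      ring
    have h1 := expand (φ x) (φ y)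
    rw [← map_add, hQ, hQ, hQ, expand x y] at h1
    have h2 : (2 : F) * (φ x * φ y).trace = (2 : F) * (x * y).trace := by
      linear_combination -h1
    exact mul_left_cancel₀ two_ne h2
  -- cubic trace form is preserved
  have hC : ∀ x : Matrix (Fin n) (Fin n) F, (φ x * φ x * φ x).trace = (x * x * x).trace := by
    intro x
    have := htrk x 3
    rwa [pow_succ, pow_two, pow_succ, pow_two] at this
  -- its partial polarization
  have hT : ∀ x z : Matrix (Fin n) (Fin n) F,
      (φ x * φ x * φ z).trace = (x * x * z).trace := by
    intro x z
    have matid : ∀ u v : Matrix (Fin n) (Fin n) F,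
        (u + u + v) * (u + u + v) * (u + u + v) + (u * u * u + (u * u * u + v * v * v))
          = (u + u) * (u + u) * (u + u)
            + ((u + v) * (u + v) * (u + v) + (u + v) * (u + v) * (u + v))
            + ((u * u * v + (u * v * u + v * u * u))
              + (u * u * v + (u * v * u + v * u * u))) := by
      intro u v; noncomm_ring
    have cyc : ∀ u v : Matrix (Fin n) (Fin n) F,
        (u * v * u).trace = (u * u * v).trace ∧ (v * u * u).trace = (u * u * v).trace := by
      intro u v
      constructor
      · rw [Matrix.trace_mul_comm (u * v) u, ← mul_assoc]
      · rw [Matrix.trace_mul_comm (v * u) u, ← mul_assoc,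
          Matrix.trace_mul_comm (u * v) u, ← mul_assoc]
    have trid : ∀ u v : Matrix (Fin n) (Fin n) F,
        ((u + u + v) * (u + u + v) * (u + u + v)).trace
            + ((u * u * u).trace + ((u * u * u).trace + (v * v * v).trace))
          = ((u + u) * (u + u) * (u + u)).trace
            + (((u + v) * (u + v) * (u + v)).trace + ((u + v) * (u + v) * (u + v)).trace)
            + (6 : F) * (u * u * v).trace := by
      intro u v
      have := congrArg Matrix.trace (matid u v)
      simp only [Matrix.trace_add] at this
      rw [(cyc u v).1, (cyc u v).2] at this
      rw [this]
      ring
    have e1 := trid (φ x) (φ z)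
    have e2 := trid x z
    have s1 : φ x + φ x + φ z = φ (x + x + z) := by rw [map_add, map_add]
    have s2 : φ x + φ x = φ (x + x) := by rw [map_add]
    have s3 : φ x + φ z = φ (x + z) := by rw [map_add]
    rw [s1, s2, s3, hC (x + x + z), hC x, hC z, hC (x + x), hC (x + z)] at e1
    rw [e2] at e1
    have h6 : (6 : F) * (φ x * φ x * φ z).trace = (6 : F) * (x * x * z).trace := by
      linear_combination -e1
    exact mul_left_cancel₀ six_ne h6
  -- conclude by nondegeneracy of the trace pairing
  have hker : ∀ m : Matrix (Fin n) (Fin n) F,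
      ((φ (a * a) - φ a * φ a) * m).trace = 0 := by
    intro m
    obtain ⟨z, rfl⟩ := hsurj m
    rw [Matrix.sub_mul, Matrix.trace_sub, hB (a * a) z, hT a z, sub_self]
  set Δ := φ (a * a) - φ a * φ a with hΔ
  have h0 := hker Δ.conjTranspose
  have hexp : (Δ * Δ.conjTranspose).trace = ∑ i, ∑ j, ((‖Δ i j‖ : F)) ^ 2 := by
    simp [Matrix.trace, Matrix.diag, Matrix.mul_apply, Matrix.conjTranspose_apply,
      RCLike.mul_conj]
  rw [hexp] at h0
  have h0re := congrArg RCLike.re h0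
  simp only [map_sum, map_zero] at h0re
  have h0re' : ∑ i, ∑ j, ‖Δ i j‖ ^ 2 = 0 := by
    rw [← h0re]
    apply Finset.sum_congr rfl
    intro i _
    apply Finset.sum_congr rfl
    intro j _
    rw [← RCLike.ofReal_pow, RCLike.ofReal_re]
  have hzero : Δ = 0 := by
    ext i j
    have hnn : ∀ i' ∈ Finset.univ (α := Fin n), (0:ℝ) ≤ ∑ j', ‖Δ i' j'‖ ^ 2 :=
      fun i' _ => Finset.sum_nonneg fun j' _ => sq_nonneg _
    have hi := (Finset.sum_eq_zero_iff_of_nonneg hnn).mp h0re' i (Finset.mem_univ i)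
    have hnn2 : ∀ j' ∈ Finset.univ (α := Fin n), (0:ℝ) ≤ ‖Δ i j'‖ ^ 2 :=
      fun j' _ => sq_nonneg _
    have hj := (Finset.sum_eq_zero_iff_of_nonneg hnn2).mp hi j (Finset.mem_univ j)
    have := pow_eq_zero_iff (n := 2) (by norm_num) |>.mp hj
    simpa using norm_eq_zero.mp this
  have := sub_eq_zero.mp hzero
  exact this
end
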